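/- arXiv:1709.10195 — 2 statements merged into one kernel-verified Lean document; each statement's English description precedes it below -/
import Mathlib

section
/- Fix M > 1 and a state u on which Φ_01 can be applied M−1 times. Then Φ_01^{M−1}(T_M(u)) = Λ^M(Φ_01^{M−1}(u)): after M−1 01-eliminations, the finite-carrier-M evolution reduces to a forward shift by M steps. Consequently the composition ν = (ν_j) of block lengths ν_j = d_j − a_j of Φ_01^{M−1}(u) is invariant under T_M. -/
/-- A state of the box-ball system: a semi-infinite `{0,1}`-sequence starting
with `0` and containing finitely many `1`s. -/
def IsState (u : ℕ → ℕ) : Prop :=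
  u 0 = 0 ∧ (∀ j, u j ≤ 1) ∧ {j | u j = 1}.Finite

/-- The set of descent positions: `u j > u (j+1)`. -/
def descSet (u : ℕ → ℕ) : Set ℕ := {j | u (j + 1) < u j}

/-- The set of ascent positions: `u j < u (j+1)`. -/
def ascSet (u : ℕ → ℕ) : Set ℕ := {j | u j < u (j + 1)}

/-- The descent number. -/
noncomputable def desN (u : ℕ → ℕ) : ℕ := (descSet u).ncard

/-- The ascent number. -/
noncomputable def ascN (u : ℕ → ℕ) : ℕ := (ascSet u).ncard

/-- The major index: sum of descent positions. -/
noncomputable def maj (u : ℕ → ℕ) : ℕ := ∑ᶠ j ∈ descSet u, j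

/-- The comajor index: sum of ascent positions. -/
noncomputable def comaj (u : ℕ → ℕ) : ℕ := ∑ᶠ j ∈ ascSet u, j

/-- The number of balls (`1`s) in a state. -/
noncomputable def numBalls (u : ℕ → ℕ) : ℕ := {j | u j = 1}.ncard

/-- The forward shift `Λ`. -/
def shift (u : ℕ → ℕ) : ℕ → ℕ := fun n => if n = 0 then 0 else u (n - 1)

/-- Position `j` is removed by the 10-elimination: it is a descent (the `1`)
or the successor of a descent (the `0`). -/
def removed10 (u : ℕ → ℕ) (j : ℕ) : Prop :=
  u (j + 1) < u j ∨ (1 ≤ j ∧ u j < u (j - 1))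

/-- Position `j` is removed by the 01-elimination. -/
def removed01 (u : ℕ → ℕ) (j : ℕ) : Prop :=
  u j < u (j + 1) ∨ (1 ≤ j ∧ u (j - 1) < u j)

/-- The 10-elimination `Φ₁₀`: removal of all adjacent `10` pairs. -/
noncomputable def elim10 (u : ℕ → ℕ) : ℕ → ℕ :=
  fun j => u (Nat.nth (fun i => ¬ removed10 u i) j)

/-- The 01-elimination `Φ₀₁`: removal of all adjacent `01` pairs. -/
noncomputable def elim01 (u : ℕ → ℕ) : ℕ → ℕ :=
  fun j => u (Nat.nth (fun i => ¬ removed01 u i) j)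

/-- Removal of the two entries at positions `a`, `a+1`. -/
def phiElim (a : ℕ) (u : ℕ → ℕ) : ℕ → ℕ := fun j => if j < a then u j else u (j + 2)

open Classical in
/-- The descent positions, listed in decreasing order. -/
noncomputable def descList (u : ℕ → ℕ) : List ℕ :=
  if h : (descSet u).Finite then (h.toFinset.sort (· ≤ ·)).reverse else []

open Classical in
/-- The ascent positions, listed in decreasing order. -/
noncomputable def ascList (u : ℕ → ℕ) : List ℕ :=
  if h : (ascSet u).Finite then (h.toFinset.sort (· ≤ ·)).reverse else []

/-- Processing the descents `d₁ > d₂ > ⋯` of the original sequence, perform the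
successive eliminations and record those positions whose elimination strictly
decreases the descent number (the "0-solitons"). -/
noncomputable def rig10Aux : List ℕ → (ℕ → ℕ) → List ℕ
  | [], _ => []
  | d :: ds, u =>
    if desN (phiElim d u) < desN u then d :: rig10Aux ds (phiElim d u)
    else rig10Aux ds (phiElim d u)

/-- The analogue of `rig10Aux` for 01-eliminations. -/
noncomputable def rig01Aux : List ℕ → (ℕ → ℕ) → List ℕ
  | [], _ => []
  | a :: as, u =>
    if ascN (phiElim a u) < ascN u then a :: rig01Aux as (phiElim a u)
    else rig01Aux as (phiElim a u)

/-- The renumbering function `f_c` associated with a set `S ⊆ ℕ` of positions: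
`f_S n = n` for `n < 0`, `f_S` stays constant at each `c ∈ S` and `c+1`, and
increases by one at every other nonnegative integer. -/
noncomputable def fren (S : Set ℕ) (n : ℤ) : ℤ :=
  n - ({m : ℕ | (m : ℤ) ≤ n ∧ (m ∈ S ∨ ∃ k ∈ S, m = k + 1)}.ncard : ℤ)

/-- The 10-rigging `ρ₁₀(u)` as a list (in decreasing order of positions). -/
noncomputable def rho10List (u : ℕ → ℕ) : List ℤ :=
  (rig10Aux (descList u) u).map (fun i => fren (descSet u) (i : ℤ))

/-- The 01-rigging `ρ₀₁(u)` as a list (in decreasing order of positions). -/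
noncomputable def rho01List (u : ℕ → ℕ) : List ℤ :=
  (rig01Aux (ascList u) u).map (fun i => fren (ascSet u) (i : ℤ))

/-- The 10-rigging as a multiset. -/
noncomputable def rho10 (u : ℕ → ℕ) : Multiset ℤ := (rho10List u : Multiset ℤ)

/-- The 01-rigging as a multiset. -/
noncomputable def rho01 (u : ℕ → ℕ) : Multiset ℤ := (rho01List u : Multiset ℤ)

/-- The (infinite-capacity) carrier of the Takahashi-Satsuma evolution:
`v 0 = 0`, `v (j+1) = v j - min (v j) (1 - u j) + u j`. -/
def car (u : ℕ → ℕ) : ℕ → ℕ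
  | 0 => 0
  | j + 1 => car u j - min (car u j) (1 - u j) + u j

/-- The Takahashi-Satsuma time evolution `T`. -/
def bbsT (u : ℕ → ℕ) : ℕ → ℕ := fun j => min (car u j) (1 - u j)

/-- The carrier of capacity `M`. -/
def carM (M : ℕ) (u : ℕ → ℕ) : ℕ → ℕ
  | 0 => 0
  | j + 1 => carM M u j - min (carM M u j) (1 - u j) + min (u j) (M - carM M u j)

/-- The time evolution `T_M` with carrier capacity `M` and box capacity `1`. -/
def TM (M : ℕ) (u : ℕ → ℕ) : ℕ → ℕ := fun j =>
  u j + min (carM M u j) (1 - u j) - min (u j) (M - carM M u j)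

/-- Interlacing condition `d₁ > a₁ > d₂ > a₂ > ⋯ > d_N > a_N ≥ 0`
(0-indexed: `a k < d k` and `d (k+1) < a k`). -/
def Interlacing (N : ℕ) (a d : Fin N → ℕ) : Prop :=
  (∀ k, a k < d k) ∧ ∀ (k : Fin N) (h : (k : ℕ) + 1 < N), d ⟨(k : ℕ) + 1, h⟩ < a k

open Classical in
/-- The state `u(a₁,…,a_N; d₁,…,d_N)`: `u j = 1` iff `a k < j ≤ d k` for some `k`. -/
noncomputable def buildState (N : ℕ) (a d : Fin N → ℕ) : ℕ → ℕ :=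
  fun j => if ∃ k, a k < j ∧ j ≤ d k then 1 else 0

/-- The lattice-word condition: every initial segment contains at least as many
`0`s as `1`s. -/
def IsLattice (u : ℕ → ℕ) : Prop :=
  IsState u ∧ ∀ k : ℕ, {j | j ≤ k ∧ u j = 1}.ncard ≤ {j | j ≤ k ∧ u j = 0}.ncard

namespace BBS16

/-- prepend a value -/
def cns (x : ℕ) (u : ℕ → ℕ) : ℕ → ℕ := fun j => if j = 0 then x else u (j - 1)

lemma cns_zero (x : ℕ) (u : ℕ → ℕ) : cns x u 0 = x := rfl

lemma cns_succ (x : ℕ) (u : ℕ → ℕ) (j : ℕ) : cns x u (j + 1) = u j := by simp [cns]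

lemma shift_eq_cns (u : ℕ → ℕ) : shift u = cns 0 u := rfl

lemma cns_inj {x : ℕ} {a b : ℕ → ℕ} (h : cns x a = cns x b) : a = b := by
  funext j
  have := congrFun h (j + 1)
  simpa [cns_succ] using this

lemma iter_cns_apply (x k : ℕ) (u : ℕ → ℕ) (j : ℕ) :
    ((cns x)^[k] u) j = if j < k then x else u (j - k) := by
  induction k generalizing j with
  | zero => simp
  | succ k ih =>
    rw [Function.iterate_succ_apply']
    match j with
    | 0 => simp [cns]
    | j + 1 =>
      rw [cns_succ, ih]
      rcases lt_or_ge j k with h | h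
      · simp [h, Nat.succ_lt_succ h]
      · have : ¬ j < k := not_lt.mpr h
        have h2 : ¬ j + 1 < k + 1 := by omega
        simp [this, h2]

/-- carrier with initial value -/
def carC (M c : ℕ) (u : ℕ → ℕ) : ℕ → ℕ
  | 0 => c
  | j + 1 => carC M c u j - min (carC M c u j) (1 - u j) + min (u j) (M - carC M c u j)

def TC (M c : ℕ) (u : ℕ → ℕ) : ℕ → ℕ := fun j =>
  u j + min (carC M c u j) (1 - u j) - min (u j) (M - carC M c u j)

lemma carM_eq_carC (M : ℕ) (u : ℕ → ℕ) : ∀ j, carM M u j = carC M 0 u j := by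
  intro j; induction j with
  | zero => rfl
  | succ j ih => simp only [carM, carC, ih]

lemma TM_eq_TC (M : ℕ) (u : ℕ → ℕ) : TM M u = TC M 0 u := by
  funext j; simp only [TM, TC, carM_eq_carC]

lemma carC_cns (M c x : ℕ) (u : ℕ → ℕ) :
    ∀ j, carC M c (cns x u) (j + 1) = carC M (c - min c (1 - x) + min x (M - c)) u j := by
  intro j; induction j with
  | zero => simp [carC, cns_zero]
  | succ j ih => rw [carC, ih, cns_succ]; rfl

lemma TC_cns (M c x : ℕ) (u : ℕ → ℕ) :
    TC M c (cns x u) =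
      cns (x + min c (1 - x) - min x (M - c))
        (TC M (c - min c (1 - x) + min x (M - c)) u) := by
  funext j
  match j with
  | 0 => simp [TC, carC, cns_zero]
  | j + 1 =>
    rw [cns_succ]
    simp only [TC, carC_cns, cns_succ]

lemma TC_cns0 (M c : ℕ) (u : ℕ → ℕ) :
    TC M c (cns 0 u) = cns (min c 1) (TC M (c - 1) u) := by
  have h1 : 0 + min c (1 - 0) - min 0 (M - c) = min c 1 := by omega
  have h2 : c - min c (1 - 0) + min 0 (M - c) = c - 1 := by omega
  rw [TC_cns, h1, h2]

lemma TC_cns1 (M c : ℕ) (u : ℕ → ℕ) :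
    TC M c (cns 1 u) = cns (1 - min 1 (M - c)) (TC M (c + min 1 (M - c)) u) := by
  have h1 : 1 + min c (1 - 1) - min 1 (M - c) = 1 - min 1 (M - c) := by omega
  have h2 : c - min c (1 - 1) + min 1 (M - c) = c + min 1 (M - c) := by omega
  rw [TC_cns, h1, h2]

lemma carC_le (M c : ℕ) (u : ℕ → ℕ) (hc : c ≤ M) : ∀ j, carC M c u j ≤ M := by
  intro j; induction j with
  | zero => exact hc
  | succ j ih =>
    rw [carC]
    have := Nat.min_le_right (u j) (M - carC M c u j)
    omega

lemma TC_le_one (M c : ℕ) (u : ℕ → ℕ) (hu : ∀ j, u j ≤ 1) (hc : c ≤ M) :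
    ∀ j, TC M c u j ≤ 1 := by
  intro j
  have h1 := hu j
  have h2 := carC_le M c u hc j
  rw [TC]
  omega


lemma TC_zeros (M : ℕ) :
    ∀ (G c : ℕ) (u : ℕ → ℕ), c ≤ M →
      TC M c ((cns 0)^[G] u) =
        (cns 1)^[min c G] ((cns 0)^[G - min c G] (TC M (c - G) u)) := by
  intro G
  induction G with
  | zero => intro c u _; simp
  | succ G ih =>
    intro c u hc
    rw [Function.iterate_succ_apply', TC_cns0]
    rw [ih (c - 1) u (by omega)]
    rcases Nat.eq_zero_or_pos c with h0 | h1
    · subst h0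
      have e1 : min 0 1 = 0 := rfl
      have e2 : min (0:ℕ) G = 0 := by omega
      have e3 : min (0:ℕ) (G+1) = 0 := by omega
      have e4 : (0:ℕ) - 1 = 0 := rfl
      have e5 : (0:ℕ) - G = 0 := by omega
      have e6 : (0:ℕ) - (G+1) = 0 := by omega
      rw [e1, e2, e3, e4, e5, e6]
      simp only [Function.iterate_zero, id_eq, Nat.sub_zero]
      exact (Function.iterate_succ_apply' _ _ _).symm
    · have e1 : min c 1 = 1 := by omega
      have e2 : min c (G + 1) = min (c - 1) G + 1 := by omega
      have e4 : c - 1 - G = c - (G + 1) := by omega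
      rw [e1, e2, e4]
      have e3 : (G + 1) - (min (c - 1) G + 1) = G - min (c - 1) G := by omega
      rw [e3]
      exact (Function.iterate_succ_apply' _ _ _).symm

lemma TC_ones (M : ℕ) :
    ∀ (B c : ℕ) (u : ℕ → ℕ), c ≤ M →
      TC M c ((cns 1)^[B] u) =
        (cns 0)^[min B (M - c)] ((cns 1)^[B - min B (M - c)] (TC M (c + min B (M - c)) u)) := by
  intro B
  induction B with
  | zero => intro c u _; simp
  | succ B ih =>
    intro c u hc
    rw [Function.iterate_succ_apply', TC_cns1]
    rcases Nat.lt_or_ge c M with hlt | hge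
    · have e1 : 1 - min 1 (M - c) = 0 := by omega
      have e2 : c + min 1 (M - c) = c + 1 := by omega
      rw [e1, e2, ih (c + 1) u (by omega)]
      have e3 : min (B + 1) (M - c) = min B (M - (c + 1)) + 1 := by omega
      rw [e3]
      have e4 : (B + 1) - (min B (M - (c + 1)) + 1) = B - min B (M - (c + 1)) := by omega
      have e5 : c + (min B (M - (c + 1)) + 1) = c + 1 + min B (M - (c + 1)) := by omega
      rw [e4, e5]
      exact (Function.iterate_succ_apply' _ _ _).symm
    · have e1 : 1 - min 1 (M - c) = 1 := by omega
      have e2 : c + min 1 (M - c) = c := by omega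
      rw [e1, e2, ih c u hc]
      have e3 : min B (M - c) = 0 := by omega
      have e4 : min (B + 1) (M - c) = 0 := by omega
      rw [e3, e4]
      simp only [Function.iterate_zero, id_eq, Nat.sub_zero, Nat.add_zero]
      exact (Function.iterate_succ_apply' _ _ _).symm

lemma zeroFn_eq_cns : (fun _ : ℕ => (0:ℕ)) = cns 0 (fun _ => 0) := by
  funext j; simp [cns]

lemma TC_zeroFn (M : ℕ) : ∀ c, c ≤ M → TC M c (fun _ => 0) = (cns 1)^[c] (fun _ => 0) := by
  intro c
  induction c with
  | zero =>
    intro _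
    have hcar : ∀ j, carC M 0 (fun _ => 0) j = 0 := by
      intro j; induction j with
      | zero => rfl
      | succ j ih => simp [carC, ih]
    funext j
    simp [TC, hcar]
  | succ c ih =>
    intro hc
    rw [zeroFn_eq_cns, TC_cns0]
    have e1 : min (c + 1) 1 = 1 := by omega
    have e2 : c + 1 - 1 = c := by omega
    rw [e1, e2, ← zeroFn_eq_cns, ih (by omega)]
    exact (Function.iterate_succ_apply' _ _ _).symm

/-- bounded support -/
def Bnd (u : ℕ → ℕ) : Prop := ∃ N, ∀ j, N ≤ j → u j = 0

lemma bnd_cns (x : ℕ) {u : ℕ → ℕ} (hu : Bnd u) : Bnd (cns x u) := by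
  obtain ⟨N, hN⟩ := hu
  exact ⟨N + 1, fun j hj => by
    match j with
    | 0 => omega
    | j + 1 => rw [cns_succ]; exact hN j (by omega)⟩

lemma bnd_iter_cns (x k : ℕ) {u : ℕ → ℕ} (hu : Bnd u) : Bnd ((cns x)^[k] u) := by
  induction k with
  | zero => exact hu
  | succ k ih => rw [Function.iterate_succ_apply']; exact bnd_cns x ih

lemma bnd_zeroFn : Bnd (fun _ : ℕ => (0:ℕ)) := ⟨0, fun _ _ => rfl⟩

lemma le_one_cns {x : ℕ} (hx : x ≤ 1) {u : ℕ → ℕ} (hu : ∀ j, u j ≤ 1) :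
    ∀ j, cns x u j ≤ 1 := by
  intro j; match j with
  | 0 => exact hx
  | j + 1 => rw [cns_succ]; exact hu j

lemma le_one_iter_cns {x : ℕ} (hx : x ≤ 1) (k : ℕ) {u : ℕ → ℕ} (hu : ∀ j, u j ≤ 1) :
    ∀ j, ((cns x)^[k] u) j ≤ 1 := by
  induction k with
  | zero => exact hu
  | succ k ih => rw [Function.iterate_succ_apply']; exact le_one_cns hx ih

lemma bnd_TC (M c : ℕ) {u : ℕ → ℕ} (hu : Bnd u) (hc : c ≤ M) : Bnd (TC M c u) := by
  obtain ⟨N, hN⟩ := hu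
  have hcar : ∀ k, carC M c u (N + k) ≤ M - k := by
    intro k; induction k with
    | zero => simpa using carC_le M c u hc N
    | succ k ih =>
      have : N + (k + 1) = (N + k) + 1 := by omega
      rw [this, carC]
      have h0 : u (N + k) = 0 := hN _ (by omega)
      rw [h0]
      omega
  refine ⟨N + M, fun j hj => ?_⟩
  have h0 : u j = 0 := hN _ (by omega)
  have hcj : carC M c u j = 0 := by
    have := hcar (j - N)
    have e : N + (j - N) = j := by omega
    rw [e] at this
    omega
  simp [TC, h0, hcj]

lemma nth_eq_of_range {p : ℕ → Prop} (hp : {i | p i}.Infinite) {f : ℕ → ℕ}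
    (hf : StrictMono f) (hr : Set.range f = {i | p i}) : Nat.nth p = f :=
  ((Nat.nth_strictMono hp).range_inj hf).mp
    (by rw [Nat.range_nth_of_infinite hp, hr])

lemma kept_infinite {u : ℕ → ℕ} (hu : Bnd u) : {i | ¬ removed01 u i}.Infinite := by
  obtain ⟨N, hN⟩ := hu
  apply Set.Infinite.mono (s := Set.Ici (N + 1))
  · intro j hj
    simp only [Set.mem_Ici] at hj
    simp only [Set.mem_setOf_eq, removed01]
    have h1 : u j = 0 := hN _ (by omega)
    have h2 : u (j + 1) = 0 := hN _ (by omega)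
    have h3 : u (j - 1) = 0 := hN _ (by omega)
    rw [h1, h2, h3]
    omega
  · exact Set.Ici_infinite _

lemma removed_cns {x : ℕ} {u : ℕ → ℕ} (hx : (x = 0 ∧ u 0 = 0) ∨ (x = 1 ∧ ∀ j, u j ≤ 1)) :
    ∀ j, removed01 (cns x u) j ↔ ∃ i, j = i + 1 ∧ removed01 u i := by
  intro j
  have hx1 : ¬ (x < u 0) := by
    rcases hx with ⟨h1, h2⟩ | ⟨h1, h2⟩
    · rw [h1, h2]; omega
    · have := h2 0; omega
  match j with
  | 0 =>
    simp only [removed01, cns_zero, cns_succ]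
    constructor
    · rintro (h | ⟨h, _⟩)
      · exact absurd h hx1
      · omega
    · rintro ⟨i, hi, _⟩; omega
  | 1 =>
    have c0 : cns x u 0 = x := rfl
    have c1 : cns x u 1 = u 0 := cns_succ x u 0
    have c2 : cns x u 2 = u 1 := cns_succ x u 1
    simp only [removed01, c0, c1, c2]
    constructor
    · rintro (h | ⟨_, h⟩)
      · exact ⟨0, rfl, Or.inl h⟩
      · exact absurd h hx1
    · rintro ⟨i, hi, h⟩
      have : i = 0 := by omega
      subst this
      rcases h with h | ⟨h, _⟩
      · exact Or.inl h
      · omega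
  | (i + 2) =>
    have c0 : cns x u (i + 2) = u (i + 1) := cns_succ x u (i + 1)
    have c1 : cns x u (i + 3) = u (i + 2) := cns_succ x u (i + 2)
    have c2 : cns x u (i + 2 - 1) = u i := by
      have : i + 2 - 1 = i + 1 := by omega
      rw [this]; exact cns_succ x u i
    simp only [removed01, c0, c1, c2]
    constructor
    · rintro (h | ⟨_, h⟩)
      · exact ⟨i + 1, rfl, Or.inl h⟩
      · refine ⟨i + 1, rfl, Or.inr ⟨by omega, ?_⟩⟩
        have : i + 1 - 1 = i := by omega
        rw [this]; exact h
    · rintro ⟨i', hi', h⟩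
      have : i' = i + 1 := by omega
      subst this
      rcases h with h | ⟨_, h⟩
      · exact Or.inl h
      · have : i + 1 - 1 = i := by omega
        rw [this] at h
        exact Or.inr ⟨by omega, h⟩

lemma elim01_cns {x : ℕ} {u : ℕ → ℕ} (hx : (x = 0 ∧ u 0 = 0) ∨ (x = 1 ∧ ∀ j, u j ≤ 1))
    (hb : Bnd u) : elim01 (cns x u) = cns x (elim01 u) := by
  have hpInf : {i | ¬ removed01 u i}.Infinite := kept_infinite hb
  have hpvInf : {i | ¬ removed01 (cns x u) i}.Infinite := kept_infinite (bnd_cns x hb)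
  set f : ℕ → ℕ := fun n => match n with
    | 0 => 0
    | k + 1 => Nat.nth (fun i => ¬ removed01 u i) k + 1 with hf_def
  have hfmono : StrictMono f := by
    intro m n hmn
    match n with
    | 0 => omega
    | n + 1 =>
      match m with
      | 0 =>
        show 0 < Nat.nth _ n + 1
        omega
      | m + 1 =>
        have := Nat.nth_lt_nth hpInf |>.mpr (show m < n by omega)
        show Nat.nth _ m + 1 < Nat.nth _ n + 1
        omega
  have hrange : Set.range f = {i | ¬ removed01 (cns x u) i} := by
    ext j
    simp only [Set.mem_range, Set.mem_setOf_eq]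
    constructor
    · rintro ⟨n, rfl⟩
      match n with
      | 0 =>
        rw [removed_cns hx]
        rintro ⟨i, hi, _⟩
        simp only [hf_def] at hi
        omega
      | k + 1 =>
        rw [removed_cns hx]
        rintro ⟨i, hi, hrem⟩
        have hi' : i = Nat.nth (fun i => ¬ removed01 u i) k := by
          simp only [hf_def] at hi; omega
        subst hi'
        exact (Nat.nth_mem_of_infinite hpInf k) hrem
    · intro hj
      match j with
      | 0 => exact ⟨0, rfl⟩
      | i + 1 =>
        rw [removed_cns hx] at hj
        push_neg at hj
        have hp : ¬ removed01 u i := hj i rfl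
        have : i ∈ Set.range (Nat.nth (fun i => ¬ removed01 u i)) := by
          rw [Nat.range_nth_of_infinite hpInf]
          exact hp
        obtain ⟨k, hk⟩ := this
        exact ⟨k + 1, by simp only [hf_def]; omega⟩
  have hnth : Nat.nth (fun i => ¬ removed01 (cns x u) i) = f :=
    nth_eq_of_range hpvInf hfmono hrange
  funext n
  show (cns x u) (Nat.nth (fun i => ¬ removed01 (cns x u) i) n) = _
  rw [hnth]
  match n with
  | 0 => rfl
  | k + 1 =>
    show (cns x u) (Nat.nth (fun i => ¬ removed01 u i) k + 1) = cns x (elim01 u) (k + 1)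
    rw [cns_succ, cns_succ]
    rfl

lemma removed_cns01 {u : ℕ → ℕ} (hu : ∀ j, u j ≤ 1) :
    ∀ j, removed01 (cns 0 (cns 1 u)) j ↔ (j = 0 ∨ j = 1 ∨ ∃ i, j = i + 2 ∧ removed01 u i) := by
  intro j
  match j with
  | 0 =>
    constructor
    · intro _; left; rfl
    · intro _
      left
      show cns 0 (cns 1 u) 0 < cns 0 (cns 1 u) 1
      rw [cns_zero, cns_succ, cns_zero]
      omega
  | 1 =>
    constructor
    · intro _; right; left; rfl
    · intro _
      right
      refine ⟨by omega, ?_⟩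
      show cns 0 (cns 1 u) 0 < cns 0 (cns 1 u) 1
      rw [cns_zero, cns_succ, cns_zero]
      omega
  | 2 =>
    have c2 : cns 0 (cns 1 u) 2 = u 0 := by rw [cns_succ, cns_succ]
    have c3 : cns 0 (cns 1 u) 3 = u 1 := by rw [cns_succ, cns_succ]
    have c1 : cns 0 (cns 1 u) 1 = 1 := by rw [cns_succ, cns_zero]
    constructor
    · intro h
      rcases h with h | ⟨_, h⟩
      · rw [c2, c3] at h
        exact Or.inr (Or.inr ⟨0, rfl, Or.inl h⟩)
      · rw [show (2:ℕ) - 1 = 1 from rfl, c1, c2] at h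
        have := hu 0; omega
    · rintro (h | h | ⟨i, hi, h⟩)
      · omega
      · omega
      · have : i = 0 := by omega
        subst this
        rcases h with h | ⟨h, _⟩
        · exact Or.inl (by rw [c2, c3]; exact h)
        · omega
  | (i + 3) =>
    have c0 : cns 0 (cns 1 u) (i + 3) = u (i + 1) := by rw [cns_succ, cns_succ]
    have c1 : cns 0 (cns 1 u) (i + 4) = u (i + 2) := by rw [cns_succ, cns_succ]
    have c2 : cns 0 (cns 1 u) (i + 3 - 1) = u i := by
      rw [show i + 3 - 1 = i + 2 from by omega, cns_succ, cns_succ]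
    constructor
    · rintro (h | ⟨_, h⟩)
      · rw [c0, c1] at h
        exact Or.inr (Or.inr ⟨i + 1, rfl, Or.inl h⟩)
      · rw [c2, c0] at h
        exact Or.inr (Or.inr ⟨i + 1, rfl, Or.inr ⟨by omega, by rw [show i + 1 - 1 = i from by omega]; exact h⟩⟩)
    · rintro (h | h | ⟨i', hi', h⟩)
      · omega
      · omega
      · have : i' = i + 1 := by omega
        subst this
        rcases h with h | ⟨_, h⟩
        · exact Or.inl (by rw [c0, c1]; exact h)
        · rw [show i + 1 - 1 = i from by omega] at h
          exact Or.inr ⟨by omega, by rw [c2, c0]; exact h⟩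

lemma elim01_cns01 {u : ℕ → ℕ} (hu : ∀ j, u j ≤ 1) (hb : Bnd u) :
    elim01 (cns 0 (cns 1 u)) = elim01 u := by
  have hpInf : {i | ¬ removed01 u i}.Infinite := kept_infinite hb
  have hpvInf : {i | ¬ removed01 (cns 0 (cns 1 u)) i}.Infinite :=
    kept_infinite (bnd_cns 0 (bnd_cns 1 hb))
  set f : ℕ → ℕ := fun n => Nat.nth (fun i => ¬ removed01 u i) n + 2 with hf_def
  have hfmono : StrictMono f := by
    intro m n hmn
    have := Nat.nth_lt_nth hpInf |>.mpr hmn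
    simp only [hf_def]
    omega
  have hrange : Set.range f = {i | ¬ removed01 (cns 0 (cns 1 u)) i} := by
    ext j
    simp only [Set.mem_range, Set.mem_setOf_eq]
    constructor
    · rintro ⟨n, rfl⟩
      rw [removed_cns01 hu]
      rintro (h | h | ⟨i, hi, hrem⟩)
      · simp only [hf_def] at h; omega
      · simp only [hf_def] at h; omega
      · have : i = Nat.nth (fun i => ¬ removed01 u i) n := by
          simp only [hf_def] at hi; omega
        subst this
        exact (Nat.nth_mem_of_infinite hpInf n) hrem
    · intro hj
      rw [removed_cns01 hu] at hj
      push_neg at hj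
      obtain ⟨h0, h1, h2⟩ := hj
      match j, h0, h1 with
      | i + 2, _, _ =>
        have hp : ¬ removed01 u i := h2 i rfl
        have : i ∈ Set.range (Nat.nth (fun i => ¬ removed01 u i)) := by
          rw [Nat.range_nth_of_infinite hpInf]; exact hp
        obtain ⟨k, hk⟩ := this
        exact ⟨k, by simp only [hf_def]; omega⟩
  have hnth : Nat.nth (fun i => ¬ removed01 (cns 0 (cns 1 u)) i) = f :=
    nth_eq_of_range hpvInf hfmono hrange
  funext n
  show (cns 0 (cns 1 u)) (Nat.nth (fun i => ¬ removed01 (cns 0 (cns 1 u)) i) n) = _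
  rw [hnth]
  show (cns 0 (cns 1 u)) (Nat.nth (fun i => ¬ removed01 u i) n + 2) = _
  rw [show Nat.nth (fun i => ¬ removed01 u i) n + 2 =
      (Nat.nth (fun i => ¬ removed01 u i) n + 1) + 1 from rfl, cns_succ, cns_succ]
  rfl

lemma elim01_le_one {u : ℕ → ℕ} (hu : ∀ j, u j ≤ 1) : ∀ j, elim01 u j ≤ 1 :=
  fun j => hu _

lemma elim01_bnd {u : ℕ → ℕ} (hu : Bnd u) : Bnd (elim01 u) := by
  obtain ⟨N, hN⟩ := hu
  refine ⟨N, fun j hj => ?_⟩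
  have hinf := kept_infinite ⟨N, hN⟩
  have hle : j ≤ Nat.nth (fun i => ¬ removed01 u i) j :=
    (Nat.nth_strictMono hinf).le_apply
  exact hN _ (by omega)

lemma elim01_zeroFn : elim01 (fun _ : ℕ => (0:ℕ)) = fun _ => 0 := rfl

lemma elim01_ones (k : ℕ) {u : ℕ → ℕ} (hu : ∀ j, u j ≤ 1) (hb : Bnd u) :
    elim01 ((cns 1)^[k] u) = (cns 1)^[k] (elim01 u) := by
  induction k with
  | zero => rfl
  | succ k ih =>
    rw [Function.iterate_succ_apply', Function.iterate_succ_apply',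
      elim01_cns (Or.inr ⟨rfl, le_one_iter_cns (by omega) k hu⟩) (bnd_iter_cns 1 k hb), ih]

lemma elim01_zeros (k : ℕ) {u : ℕ → ℕ} (h0 : u 0 = 0) (hb : Bnd u) :
    elim01 ((cns 0)^[k] u) = (cns 0)^[k] (elim01 u) := by
  induction k with
  | zero => rfl
  | succ k ih =>
    have hhead : ((cns 0)^[k] u) 0 = 0 := by
      match k with
      | 0 => exact h0
      | k + 1 => rw [Function.iterate_succ_apply']; rfl
    rw [Function.iterate_succ_apply', Function.iterate_succ_apply',
      elim01_cns (Or.inl ⟨rfl, hhead⟩) (bnd_iter_cns 0 k hb), ih]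

lemma elim01_zeros_ones (k j : ℕ) {u : ℕ → ℕ} (hu : ∀ i, u i ≤ 1) (hb : Bnd u) :
    elim01 ((cns 0)^[k + 1] ((cns 1)^[j + 1] u)) = (cns 0)^[k] ((cns 1)^[j] (elim01 u)) := by
  have h1 : (cns 0)^[k + 1] ((cns 1)^[j + 1] u)
      = (cns 0)^[k] (cns 0 (cns 1 ((cns 1)^[j] u))) := by
    rw [Function.iterate_succ_apply (cns 0), Function.iterate_succ_apply' (cns 1)]
  rw [h1, elim01_zeros k (by rfl) (bnd_cns 0 (bnd_cns 1 (bnd_iter_cns 1 j hb))),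
    elim01_cns01 (le_one_iter_cns (by omega) j hu) (bnd_iter_cns 1 j hb),
    elim01_ones j hu hb]

/-- the state built from a list of (gap, block) data -/
def stOf : List (ℕ × ℕ) → ℕ → ℕ
  | [] => fun _ => 0
  | (g, b) :: L => (cns 0)^[g + 1] ((cns 1)^[b + 1] (stOf L))

lemma stOf_le_one (L : List (ℕ × ℕ)) : ∀ j, stOf L j ≤ 1 := by
  induction L with
  | nil => intro j; exact Nat.zero_le 1
  | cons hd tl ih =>
    exact le_one_iter_cns (by omega) _ (le_one_iter_cns (by omega) _ ih)

lemma stOf_bnd (L : List (ℕ × ℕ)) : Bnd (stOf L) := by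
  induction L with
  | nil => exact bnd_zeroFn
  | cons hd tl ih => exact bnd_iter_cns _ _ (bnd_iter_cns _ _ ih)

lemma stOf_zero (L : List (ℕ × ℕ)) : stOf L 0 = 0 := by
  cases L with
  | nil => rfl
  | cons hd tl =>
    show ((cns 0)^[hd.1 + 1] _) 0 = 0
    rw [Function.iterate_succ_apply']
    rfl

/-- tail of a sequence -/
def tl (u : ℕ → ℕ) : ℕ → ℕ := fun j => u (j + 1)

lemma eq_cns_tl (u : ℕ → ℕ) : u = cns (u 0) (tl u) := by
  funext j
  match j with
  | 0 => rfl
  | j + 1 => rw [cns_succ]; rfl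

lemma tl_le_one {u : ℕ → ℕ} (hu : ∀ j, u j ≤ 1) : ∀ j, tl u j ≤ 1 := fun j => hu _

lemma tl_bnd {u : ℕ → ℕ} (hu : Bnd u) : Bnd (tl u) := by
  obtain ⟨N, hN⟩ := hu
  exact ⟨N, fun j hj => hN _ (by omega)⟩

lemma exists_stOf : ∀ (N : ℕ) (u : ℕ → ℕ), (∀ j, u j ≤ 1) → u 0 = 0 →
    (∀ j, N ≤ j → u j = 0) → ∃ L, u = stOf L := by
  intro N
  induction N using Nat.strong_induction_on with
  | _ N IH =>
    intro u hu h0 hN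
    by_cases hz : ∀ j, u j = 0
    · exact ⟨[], funext fun j => hz j⟩
    · push_neg at hz
      have ha : ∃ a, u a ≠ 0 := hz
      set a := Nat.find ha with ha_def
      have hua : u a ≠ 0 := Nat.find_spec ha
      have hua1 : u a = 1 := by have := hu a; omega
      have halt : ∀ j, j < a → u j = 0 := fun j hj => by
        by_contra h
        exact absurd (Nat.find_min ha hj) (by simp [h])
      have ha1 : 1 ≤ a := by
        by_contra h
        have : a = 0 := by omega
        rw [this] at hua1; omega
      have haN : a < N := by
        by_contra h
        have := hN a (by omega)
        omega
      have he : ∃ e, a + 1 ≤ e ∧ u e = 0 := ⟨N, by omega, hN N le_rfl⟩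
      set e := Nat.find he with he_def
      obtain ⟨hea, hue⟩ := Nat.find_spec he
      have heN : e ≤ N := Nat.find_min' he ⟨by omega, hN N le_rfl⟩
      have hblock : ∀ j, a ≤ j → j < e → u j = 1 := by
        intro j hj1 hj2
        rcases Nat.eq_or_lt_of_le hj1 with h | h
        · rw [← h]; exact hua1
        · by_contra hc
          have h0j : u j = 0 := by have := hu j; omega
          exact absurd (Nat.find_min he hj2) (by simp [h0j]; omega)
      set u2 : ℕ → ℕ := fun j => u (e + j) with hu2_def
      have hu2 : ∀ j, u2 j ≤ 1 := fun j => hu _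
      have hu20 : u2 0 = 0 := by simpa [hu2_def] using hue
      have hu2N : ∀ j, N - e ≤ j → u2 j = 0 := by
        intro j hj
        exact hN _ (by omega)
      obtain ⟨L2, hL2⟩ := IH (N - e) (by omega) u2 hu2 hu20 hu2N
      refine ⟨(a - 1, e - a - 1) :: L2, ?_⟩
      show u = (cns 0)^[(a - 1) + 1] ((cns 1)^[(e - a - 1) + 1] (stOf L2))
      have ea1 : (a - 1) + 1 = a := by omega
      have ea2 : (e - a - 1) + 1 = e - a := by omega
      rw [ea1, ea2, ← hL2]
      funext j
      rw [iter_cns_apply]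
      rcases lt_or_ge j a with hja | hja
      · simp [hja, halt j hja]
      · have hnlt : ¬ j < a := by omega
        simp only [hnlt, if_false]
        rw [iter_cns_apply]
        rcases lt_or_ge j e with hje | hje
        · have : j - a < e - a := by omega
          simp [this, (hblock j hja hje).symm]
        · have hnlt2 : ¬ j - a < e - a := by omega
          simp only [hnlt2, if_false, hu2_def]
          have : e + (j - a - (e - a)) = j := by omega
          rw [this]

lemma key (L : List (ℕ × ℕ)) : ∀ (M c : ℕ), 2 ≤ M → c ≤ M →
    elim01 (TC M c (stOf L)) = cns (min c 1) (TC (M - 1) (c - 1) (elim01 (stOf L))) := by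
  induction L with
  | nil =>
    intro M c hM hc
    show elim01 (TC M c (fun _ => 0)) = cns (min c 1) (TC (M - 1) (c - 1) (elim01 (fun _ => 0)))
    rw [TC_zeroFn M c hc, elim01_zeroFn, TC_zeroFn (M - 1) (c - 1) (by omega)]
    rw [elim01_ones c (fun _ => Nat.zero_le 1) bnd_zeroFn, elim01_zeroFn]
    rcases Nat.eq_zero_or_pos c with h0 | h1
    · subst h0
      simp only [Nat.zero_sub, Function.iterate_zero, id_eq]
      rw [show min 0 1 = 0 from rfl, ← zeroFn_eq_cns]
    · rw [show min c 1 = 1 from by omega]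
      have : c = (c - 1) + 1 := by omega
      rw [this, Function.iterate_succ_apply' (cns 1)]
      simp only [Nat.add_sub_cancel]
  | cons hd L' ih =>
    intro M c hM hc
    obtain ⟨g, b⟩ := hd
    have hu'le := stOf_le_one L'
    have hu'bnd := stOf_bnd L'
    have hu'0 := stOf_zero L'
    -- abbreviations
    have hc1M : c - (g + 1) ≤ M - 1 := by omega
    have hq1 : 1 ≤ min (b + 1) (M - (c - (g + 1))) := by omega
    have hc2M : c - (g + 1) + min (b + 1) (M - (c - (g + 1))) ≤ M := by omega
    -- normalize LHS sequence
    have hL1 : TC M c (stOf ((g, b) :: L')) =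
        (cns 1)^[min c (g + 1)]
          ((cns 0)^[(g + 1) - min c (g + 1) + min (b + 1) (M - (c - (g + 1)))]
            ((cns 1)^[(b + 1) - min (b + 1) (M - (c - (g + 1)))]
              (TC M (c - (g + 1) + min (b + 1) (M - (c - (g + 1)))) (stOf L')))) := by
      show TC M c ((cns 0)^[g + 1] ((cns 1)^[b + 1] (stOf L'))) = _
      rw [TC_zeros M (g + 1) c _ hc, TC_ones M (b + 1) (c - (g + 1)) (stOf L') (by omega),
        ← Function.iterate_add_apply (cns 0)]
    -- normalize RHS elimination
    have hR1 : elim01 (stOf ((g, b) :: L')) = (cns 0)^[g] ((cns 1)^[b] (elim01 (stOf L'))) := by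
      show elim01 ((cns 0)^[g + 1] ((cns 1)^[b + 1] (stOf L'))) = _
      exact elim01_zeros_ones g b hu'le hu'bnd
    rw [hL1, hR1]
    rw [TC_zeros (M - 1) g (c - 1) _ (by omega),
      TC_ones (M - 1) b ((c - 1) - g) (elim01 (stOf L')) (by omega),
      ← Function.iterate_add_apply (cns 0)]
    have hbin2 : ∀ j, ((cns 0)^[(g + 1) - min c (g + 1) + min (b + 1) (M - (c - (g + 1)))]
        ((cns 1)^[(b + 1) - min (b + 1) (M - (c - (g + 1)))]
          (TC M (c - (g + 1) + min (b + 1) (M - (c - (g + 1)))) (stOf L')))) j ≤ 1 :=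
      le_one_iter_cns (by omega) _ (le_one_iter_cns (by omega) _
        (TC_le_one _ _ _ hu'le hc2M))
    have hbnd2 : Bnd ((cns 0)^[(g + 1) - min c (g + 1) + min (b + 1) (M - (c - (g + 1)))]
        ((cns 1)^[(b + 1) - min (b + 1) (M - (c - (g + 1)))]
          (TC M (c - (g + 1) + min (b + 1) (M - (c - (g + 1)))) (stOf L')))) :=
      bnd_iter_cns _ _ (bnd_iter_cns _ _ (bnd_TC _ _ hu'bnd hc2M))
    rw [elim01_ones (min c (g + 1)) hbin2 hbnd2]
    have hc1g : (c - 1) - g = c - (g + 1) := by omega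
    rw [hc1g]
    rcases Nat.lt_or_ge (min (b + 1) (M - (c - (g + 1)))) (b + 1) with hqB | hqB
    · -- Case A : carrier fills up inside the block
      have hq : min (b + 1) (M - (c - (g + 1))) = M - (c - (g + 1)) := by omega
      have hc2 : c - (g + 1) + min (b + 1) (M - (c - (g + 1))) = M := by omega
      rw [hc2]
      -- rewrite the zero-run and one-run exponents into successor form
      have hz : (g + 1) - min c (g + 1) + min (b + 1) (M - (c - (g + 1)))
          = ((g + 1) - min c (g + 1) + min (b + 1) (M - (c - (g + 1))) - 1) + 1 := by omega
      have hγ : (b + 1) - min (b + 1) (M - (c - (g + 1)))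
          = ((b + 1) - min (b + 1) (M - (c - (g + 1))) - 1) + 1 := by omega
      rw [hz, hγ, elim01_zeros_ones _ _ (TC_le_one M M _ hu'le le_rfl) (bnd_TC M M hu'bnd le_rfl)]
      rw [ih M M hM le_rfl, show min M 1 = 1 from by omega]
      rw [← Function.iterate_succ_apply (cns 1)]
      -- RHS arithmetic
      have hq1' : min b ((M - 1) - (c - (g + 1))) = min (b + 1) (M - (c - (g + 1))) - 1 := by
        omega
      rw [hq1']
      have hδ : c - (g + 1) + (min (b + 1) (M - (c - (g + 1))) - 1) = M - 1 := by omega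
      rw [hδ]
      rcases Nat.eq_zero_or_pos c with h0 | h1
      · subst h0
        rw [show min 0 (g + 1) = 0 from by omega, show min (0:ℕ) 1 = 0 from rfl,
          show (0:ℕ) - 1 = 0 from rfl, show min (0:ℕ) g = 0 from by omega]
        simp only [Function.iterate_zero, id_eq]
        rw [← Function.iterate_succ_apply' (cns 0)]
        simp only [Nat.succ_eq_add_one]
        have e1 : (g - 0 + (min (b + 1) (M - (0 - (g + 1))) - 1)) + 1
            = (g + 1) - 0 + min (b + 1) (M - (0 - (g + 1))) - 1 := by omega
        rw [e1]
        have e2 : b - (min (b + 1) (M - (0 - (g + 1))) - 1)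
            = (b + 1) - min (b + 1) (M - (0 - (g + 1))) - 1 + 1 := by omega
        rw [e2]
      · rw [show min c 1 = 1 from by omega]
        have hp1 : min (c - 1) g = min c (g + 1) - 1 := by omega
        rw [hp1, ← Function.iterate_succ_apply' (cns 1)]
        simp only [Nat.succ_eq_add_one]
        have e0 : (min c (g + 1) - 1) + 1 = min c (g + 1) := by omega
        rw [e0]
        have e1 : g - (min c (g + 1) - 1) + (min (b + 1) (M - (c - (g + 1))) - 1)
            = (g + 1) - min c (g + 1) + min (b + 1) (M - (c - (g + 1))) - 1 := by omega
        rw [e1]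
        have e2 : b - (min (b + 1) (M - (c - (g + 1))) - 1)
            = (b + 1) - min (b + 1) (M - (c - (g + 1))) - 1 + 1 := by omega
        rw [e2]
    · -- Case B : the whole block is absorbed by the carrier
      have hq : min (b + 1) (M - (c - (g + 1))) = b + 1 := by omega
      have hγ0 : (b + 1) - min (b + 1) (M - (c - (g + 1))) = 0 := by omega
      rw [hγ0]
      simp only [Function.iterate_zero, id_eq]
      -- the head of the continuation
      have hu'cns : stOf L' = cns 0 (tl (stOf L')) := by
        funext j
        match j with
        | 0 => exact hu'0
        | j + 1 => rw [cns_succ]; rfl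
      have hYbin : ∀ j, TC M (c - (g + 1) + min (b + 1) (M - (c - (g + 1))) - 1)
          (tl (stOf L')) j ≤ 1 :=
        TC_le_one _ _ _ (tl_le_one hu'le) (by omega)
      have hYbnd : Bnd (TC M (c - (g + 1) + min (b + 1) (M - (c - (g + 1))) - 1)
          (tl (stOf L'))) :=
        bnd_TC _ _ (tl_bnd hu'bnd) (by omega)
      have hX : TC M (c - (g + 1) + min (b + 1) (M - (c - (g + 1)))) (stOf L')
          = cns 1 (TC M (c - (g + 1) + min (b + 1) (M - (c - (g + 1))) - 1)
              (tl (stOf L'))) := by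
        conv_lhs => rw [hu'cns]
        rw [TC_cns0]
        rw [show min (c - (g + 1) + min (b + 1) (M - (c - (g + 1)))) 1 = 1 from by omega]
      have hY : elim01 (TC M (c - (g + 1) + min (b + 1) (M - (c - (g + 1))) - 1)
          (tl (stOf L')))
          = TC (M - 1) (c - (g + 1) + min (b + 1) (M - (c - (g + 1))) - 1)
              (elim01 (stOf L')) := by
        have h1 := ih M (c - (g + 1) + min (b + 1) (M - (c - (g + 1)))) hM hc2M
        rw [hX, elim01_cns (Or.inr ⟨rfl, hYbin⟩) hYbnd,
          show min (c - (g + 1) + min (b + 1) (M - (c - (g + 1)))) 1 = 1 from by omega] at h1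
        exact cns_inj h1
      have hz : (g + 1) - min c (g + 1) + min (b + 1) (M - (c - (g + 1)))
          = ((g + 1) - min c (g + 1) + min (b + 1) (M - (c - (g + 1))) - 1) + 1 := by omega
      rw [hz, Function.iterate_succ_apply (cns 0), hX]
      rw [elim01_zeros _ (by rw [cns_zero]) (bnd_cns 0 (bnd_cns 1 hYbnd))]
      rw [elim01_cns01 hYbin hYbnd, hY]
      -- RHS arithmetic
      have hq1' : min b ((M - 1) - (c - (g + 1))) = b := by omega
      rw [hq1']
      have hγ1 : b - b = 0 := by omega
      rw [hγ1]
      simp only [Function.iterate_zero, id_eq]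
      have hδ : c - (g + 1) + b
          = c - (g + 1) + min (b + 1) (M - (c - (g + 1))) - 1 := by omega
      rw [hδ]
      rcases Nat.eq_zero_or_pos c with h0 | h1
      · subst h0
        rw [show min 0 (g + 1) = 0 from by omega, show min (0:ℕ) 1 = 0 from rfl,
          show (0:ℕ) - 1 = 0 from rfl, show min (0:ℕ) g = 0 from by omega]
        simp only [Function.iterate_zero, id_eq]
        rw [← Function.iterate_succ_apply' (cns 0)]
        simp only [Nat.succ_eq_add_one]
        have e1' : g - 0 + b + 1 = (g + 1) - 0 + min (b + 1) (M - (0 - (g + 1))) - 1 := by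
          omega
        rw [e1']
      · rw [show min c 1 = 1 from by omega]
        have hp1 : min (c - 1) g = min c (g + 1) - 1 := by omega
        rw [hp1, ← Function.iterate_succ_apply' (cns 1)]
        simp only [Nat.succ_eq_add_one]
        have e0 : (min c (g + 1) - 1) + 1 = min c (g + 1) := by omega
        rw [e0]
        have e1 : g - (min c (g + 1) - 1) + b
            = (g + 1) - min c (g + 1) + min (b + 1) (M - (c - (g + 1))) - 1 := by omega
        rw [e1]

lemma key0 {u : ℕ → ℕ} (M : ℕ) (hM : 2 ≤ M) (hle : ∀ j, u j ≤ 1) (h0 : u 0 = 0)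
    (hb : Bnd u) : elim01 (TM M u) = shift (TM (M - 1) (elim01 u)) := by
  obtain ⟨N, hN⟩ := hb
  obtain ⟨L, rfl⟩ := exists_stOf N u hle h0 hN
  have h := key L M 0 hM (by omega)
  rw [TM_eq_TC, TM_eq_TC (M - 1)]
  rw [show shift (TC (M - 1) 0 (elim01 (stOf L))) = cns 0 (TC (M - 1) 0 (elim01 (stOf L)))
    from rfl]
  rw [show (0:ℕ) - 1 = 0 from rfl] at h
  rw [show min (0:ℕ) 1 = 0 from rfl] at h
  exact h

lemma TM_one {u : ℕ → ℕ} (hu : ∀ j, u j ≤ 1) : TM 1 u = shift u := by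
  have hcar : ∀ j, carM 1 u j ≤ 1 ∧ (∀ i, j = i + 1 → carM 1 u j = u i) := by
    intro j
    induction j with
    | zero => exact ⟨Nat.zero_le 1, fun i h => by omega⟩
    | succ j ih =>
      obtain ⟨h1, _⟩ := ih
      have h2 := hu j
      constructor
      · rw [carM]; omega
      · intro i hi
        have : i = j := by omega
        subst this
        rw [carM]; omega
  funext j
  match j with
  | 0 =>
    have := hu 0
    show u 0 + min (carM 1 u 0) (1 - u 0) - min (u 0) (1 - carM 1 u 0) = _
    rw [show carM 1 u 0 = 0 from rfl, show shift u 0 = 0 from rfl]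
    omega
  | j + 1 =>
    have h1 := (hcar (j + 1)).2 j rfl
    have h2 := hu j
    have h3 := hu (j + 1)
    show u (j + 1) + min (carM 1 u (j + 1)) (1 - u (j + 1))
        - min (u (j + 1)) (1 - carM 1 u (j + 1)) = shift u (j + 1)
    rw [h1, show shift u (j + 1) = u j from by simp [shift]]
    omega

lemma elim01_shift_iter (k : ℕ) {y : ℕ → ℕ} (h0 : y 0 = 0) (hb : Bnd y) :
    elim01 (shift^[k] y) = shift^[k] (elim01 y) := by
  have hs : shift = cns 0 := funext shift_eq_cns
  rw [hs]
  exact elim01_zeros k h0 hb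

lemma isState_bnd {u : ℕ → ℕ} (h : IsState u) : Bnd u := by
  obtain ⟨h0, h1, hfin⟩ := h
  obtain ⟨N, hN⟩ := hfin.bddAbove
  refine ⟨N + 1, fun j hj => ?_⟩
  have h2 := h1 j
  by_contra hne
  have hj1 : u j = 1 := by omega
  have := hN (show j ∈ {j | u j = 1} from hj1)
  omega

lemma TM_zero_head {u : ℕ → ℕ} (h0 : u 0 = 0) (M : ℕ) : TM M u 0 = 0 := by
  show u 0 + min (carM M u 0) (1 - u 0) - min (u 0) (M - carM M u 0) = 0
  rw [show carM M u 0 = 0 from rfl, h0]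
  omega

lemma TM_le_one {u : ℕ → ℕ} (hu : ∀ j, u j ≤ 1) (M : ℕ) : ∀ j, TM M u j ≤ 1 := by
  rw [TM_eq_TC]
  exact TC_le_one M 0 u hu (Nat.zero_le M)

lemma TM_bnd {u : ℕ → ℕ} (hb : Bnd u) (M : ℕ) : Bnd (TM M u) := by
  rw [TM_eq_TC]
  exact bnd_TC M 0 hb (Nat.zero_le M)

theorem part1 (M : ℕ) (hM : 1 < M) (u : ℕ → ℕ)
    (hu : ∀ k ≤ M - 1, IsState (elim01^[k] u)) :
    elim01^[M - 1] (TM M u) = shift^[M] (elim01^[M - 1] u) := by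
  have hst : ∀ k ≤ M - 1, (elim01^[k] u) 0 = 0 ∧ (∀ j, elim01^[k] u j ≤ 1)
      ∧ Bnd (elim01^[k] u) := by
    intro k hk
    obtain ⟨h0, h1, _⟩ := hu k hk
    exact ⟨h0, h1, isState_bnd (hu k hk)⟩
  have main : ∀ k ≤ M - 1,
      elim01^[k] (TM M u) = shift^[k] (TM (M - k) (elim01^[k] u)) := by
    intro k
    induction k with
    | zero => intro _; simp
    | succ k ihk =>
      intro hk1
      have hk : k ≤ M - 1 := by omega
      rw [Function.iterate_succ_apply' elim01, ihk hk]
      obtain ⟨hk0, hkle, hkbnd⟩ := hst k hk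
      have hy0 : TM (M - k) (elim01^[k] u) 0 = 0 := TM_zero_head hk0 _
      have hybnd : Bnd (TM (M - k) (elim01^[k] u)) := TM_bnd hkbnd _
      rw [elim01_shift_iter k hy0 hybnd]
      rw [key0 (M - k) (by omega) hkle hk0 hkbnd]
      rw [show M - k - 1 = M - (k + 1) from by omega]
      rw [← Function.iterate_succ_apply shift]
      rw [← Function.iterate_succ_apply' elim01]
  have hfin := main (M - 1) le_rfl
  obtain ⟨hm0, hmle, _⟩ := hst (M - 1) le_rfl
  rw [show M - (M - 1) = 1 from by omega] at hfin
  rw [TM_one hmle] at hfin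
  rw [← Function.iterate_succ_apply shift] at hfin
  rw [show (M - 1).succ = M from by omega] at hfin
  exact hfin

lemma ascSet_shift {v : ℕ → ℕ} (h0 : v 0 = 0) :
    ascSet (shift v) = (fun j => j + 1) '' ascSet v := by
  ext j
  simp only [ascSet, Set.mem_setOf_eq, Set.mem_image]
  match j with
  | 0 =>
    constructor
    · intro h
      rw [show shift v 0 = 0 from rfl, show shift v 1 = v 0 from rfl, h0] at h
      omega
    · rintro ⟨x, _, hx⟩; omega
  | j + 1 =>
    rw [show shift v (j + 1) = v j from by simp [shift],
      show shift v (j + 2) = v (j + 1) from by simp [shift]]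
    constructor
    · intro h; exact ⟨j, h, rfl⟩
    · rintro ⟨x, hx, hxe⟩
      have : x = j := by omega
      subst this
      exact hx

lemma descSet_shift (v : ℕ → ℕ) :
    descSet (shift v) = (fun j => j + 1) '' descSet v := by
  ext j
  simp only [descSet, Set.mem_setOf_eq, Set.mem_image]
  match j with
  | 0 =>
    constructor
    · intro h
      rw [show shift v 0 = 0 from rfl] at h
      omega
    · rintro ⟨x, _, hx⟩; omega
  | j + 1 =>
    rw [show shift v (j + 1) = v j from by simp [shift],
      show shift v (j + 2) = v (j + 1) from by simp [shift]]
    constructor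
    · intro h; exact ⟨j, h, rfl⟩
    · rintro ⟨x, hx, hxe⟩
      have : x = j := by omega
      subst this
      exact hx

lemma ascSet_shift_iter (k : ℕ) {v : ℕ → ℕ} (h0 : v 0 = 0) :
    ascSet (shift^[k] v) = (fun j => j + k) '' ascSet v := by
  induction k with
  | zero => simp
  | succ k ih =>
    have hh : (shift^[k] v) 0 = 0 := by
      match k with
      | 0 => exact h0
      | k + 1 => rw [Function.iterate_succ_apply']; rfl
    rw [Function.iterate_succ_apply', ascSet_shift hh, ih, Set.image_image]
    ext j
    simp only [Set.mem_image]
    constructor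
    · rintro ⟨x, hx, rfl⟩; exact ⟨x, hx, by omega⟩
    · rintro ⟨x, hx, rfl⟩; exact ⟨x, hx, by omega⟩

lemma descSet_shift_iter (k : ℕ) (v : ℕ → ℕ) :
    descSet (shift^[k] v) = (fun j => j + k) '' descSet v := by
  induction k with
  | zero => simp
  | succ k ih =>
    rw [Function.iterate_succ_apply', descSet_shift, ih, Set.image_image]
    ext j
    simp only [Set.mem_image]
    constructor
    · rintro ⟨x, hx, rfl⟩; exact ⟨x, hx, by omega⟩
    · rintro ⟨x, hx, rfl⟩; exact ⟨x, hx, by omega⟩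

end BBS16

/-- after `M−1` 01-eliminations the capacity-`M` evolution is a
forward shift by `M`; consequently the block lengths `ν_j = d_j − a_j` of
`Φ₀₁^{M−1}(u)` are invariant under `T_M`. -/
theorem stmt16 (M : ℕ) (hM : 1 < M) (u : ℕ → ℕ)
    (hu : ∀ k ≤ M - 1, IsState (elim01^[k] u)) :
    elim01^[M - 1] (TM M u) = shift^[M] (elim01^[M - 1] u) ∧
    ∀ (n : ℕ) (a d a' d' : Fin n → ℕ),
      StrictAnti a → StrictAnti d → StrictAnti a' → StrictAnti d' →
      Set.range a = ascSet (elim01^[M - 1] u) →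
      Set.range d = descSet (elim01^[M - 1] u) →
      Set.range a' = ascSet (elim01^[M - 1] (TM M u)) →
      Set.range d' = descSet (elim01^[M - 1] (TM M u)) →
      ∀ j : Fin n, (d j : ℤ) - (a j : ℤ) = (d' j : ℤ) - (a' j : ℤ) := by
  have hpart := BBS16.part1 M hM u hu
  refine ⟨hpart, ?_⟩
  intro n a d a' d' haA hdA ha'A hd'A hra hrd hra' hrd' j
  have hw0 : (elim01^[M - 1] u) 0 = 0 := (hu (M - 1) le_rfl).1
  have hasc : ascSet (elim01^[M - 1] (TM M u))
      = (fun j => j + M) '' ascSet (elim01^[M - 1] u) := by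
    rw [hpart]; exact BBS16.ascSet_shift_iter M hw0
  have hdesc : descSet (elim01^[M - 1] (TM M u))
      = (fun j => j + M) '' descSet (elim01^[M - 1] u) := by
    rw [hpart]; exact BBS16.descSet_shift_iter M _
  have hA : StrictAnti (fun j : Fin n => a j + M) := by
    intro i j h
    show a j + M < a i + M
    have := haA h; omega
  have hD : StrictAnti (fun j : Fin n => d j + M) := by
    intro i j h
    show d j + M < d i + M
    have := hdA h; omega
  have hrA : Set.range (fun j : Fin n => a j + M)
      = ascSet (elim01^[M - 1] (TM M u)) := by
    rw [hasc, ← hra]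
    exact Set.range_comp (fun x => x + M) a
  have hrD : Set.range (fun j : Fin n => d j + M)
      = descSet (elim01^[M - 1] (TM M u)) := by
    rw [hdesc, ← hrd]
    exact Set.range_comp (fun x => x + M) d
  have hea : a' = fun j : Fin n => a j + M :=
    Set.range_injOn_strictAnti ha'A hA (hra'.trans hrA.symm)
  have hed : d' = fun j : Fin n => d j + M :=
    Set.range_injOn_strictAnti hd'A hD (hrd'.trans hrD.symm)
  rw [hea, hed]
  push_cast
  ring
end

section
/- For any state u, the following recursion for the comajor index holds: comaj(u) = comaj(Φ_01(u)) + asc(u)^2 + Σ_{j ∈ ρ_01(u)} j, where the sum is over the entries of the 01-rigging of u. An analogous identity holds for the major index: maj(u) = maj(Φ_10(u)) + des(u)^2 + Σ_{j ∈ ρ_10(u)} j. -/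
-- basics
lemma mem_ascSet_iff {v : ℕ → ℕ} (h1 : ∀ j, v j ≤ 1) {j : ℕ} :
    j ∈ ascSet v ↔ v j = 0 ∧ v (j + 1) = 1 := by
  have := h1 j; have := h1 (j + 1); constructor
  · intro h; simp only [ascSet, Set.mem_setOf_eq] at h; omega
  · intro h; simp only [ascSet, Set.mem_setOf_eq]; omega

lemma phiElim_le_one {v : ℕ → ℕ} (h1 : ∀ j, v j ≤ 1) (a : ℕ) : ∀ j, phiElim a v j ≤ 1 := by
  intro j; unfold phiElim; split <;> apply h1

lemma ascSet_finite_of_ones {u : ℕ → ℕ} (h : {j | u j = 1}.Finite) (h1 : ∀ j, u j ≤ 1) :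
    (ascSet u).Finite := by
  apply Set.Finite.subset (h.preimage (f := fun j => j + 1) (by intro x _ y _ h; simp only [] at h; omega))
  intro j hj
  have := h1 j; have := h1 (j + 1)
  simp only [ascSet, Set.mem_setOf_eq] at hj
  simp only [Set.mem_preimage, Set.mem_setOf_eq]; omega

lemma descSet_finite_of_ones {u : ℕ → ℕ} (h : {j | u j = 1}.Finite) (h1 : ∀ j, u j ≤ 1) :
    (descSet u).Finite := by
  apply Set.Finite.subset h
  intro j hj
  have := h1 j; have := h1 (j + 1)
  simp only [descSet, Set.mem_setOf_eq] at hj ⊢; omega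

/-- The condition under which eliminating the pair at ascent `a` creates a new ascent. -/
def Ecnd (a : ℕ) (v : ℕ → ℕ) : Prop := 1 ≤ a ∧ v (a - 1) = 0 ∧ v (a + 2) = 1

lemma mem_ascSet_phiElim {v : ℕ → ℕ} (h1 : ∀ j, v j ≤ 1) {a : ℕ} (ha : a ∈ ascSet v) (b : ℕ) :
    b ∈ ascSet (phiElim a v) ↔
      (b ∈ ascSet v ∧ b + 1 < a) ∨ (b + 1 = a ∧ Ecnd a v) ∨
      (b + 2 ∈ ascSet v ∧ a ≤ b) := by
  have hva := (mem_ascSet_iff h1).1 ha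
  have e1 : ∀ m n : ℕ, m = n → v m = v n := fun m n h => congrArg v h
  have k0 := h1 b; have k1 := h1 (b+1); have k2 := h1 (b+2); have k3 := h1 (b+3)
  simp only [ascSet, Set.mem_setOf_eq, phiElim, Ecnd]
  split_ifs with h₁ h₂ h₂
  · omega
  · have l1 : v (a-1) = v b := e1 _ _ (by omega)
    have l2 : v (a+2) = v (b+1+2) := e1 _ _ (by omega)
    have l3 : v (b+1+2) = v (b+3) := e1 _ _ (by omega)
    have l4 : v (b+2+1) = v (b+3) := e1 _ _ (by omega)
    omega
  · omega
  · have l3 : v (b+1+2) = v (b+3) := e1 _ _ (by omega)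
    have l4 : v (b+2+1) = v (b+3) := e1 _ _ (by omega)
    omega

open Classical

lemma ascSet_phiElim_finite {v : ℕ → ℕ} (h1 : ∀ j, v j ≤ 1) (h2 : (ascSet v).Finite)
    {a : ℕ} (ha : a ∈ ascSet v) : (ascSet (phiElim a v)).Finite := by
  apply Set.Finite.subset ((h2.union (Set.finite_singleton (a-1))).union (h2.image (· - 2)))
  intro b hb
  rcases (mem_ascSet_phiElim h1 ha b).1 hb with ⟨h,_⟩|⟨h,hE⟩|⟨h,_⟩
  · exact Or.inl (Or.inl h)
  · exact Or.inl (Or.inr (by simp; omega))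
  · exact Or.inr ⟨b+2, h, rfl⟩

lemma asc_lt_strict {v : ℕ → ℕ} (h1 : ∀ j, v j ≤ 1) {a : ℕ} (ha : a ∈ ascSet v) :
    ∀ b ∈ ascSet v, b < a → b + 1 < a := by
  intro b hb hba
  by_contra hc
  have hb1 : b + 1 = a := by omega
  have h3 := (mem_ascSet_iff h1).1 hb
  have h4 := (mem_ascSet_iff h1).1 ha
  rw [hb1] at h3
  omega

lemma decompA {v : ℕ → ℕ} (h1 : ∀ j, v j ≤ 1) (h2 : (ascSet v).Finite)
    {a : ℕ} (ha : a ∈ ascSet v) :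
    h2.toFinset = insert a (h2.toFinset.filter (· < a) ∪ h2.toFinset.filter (fun b => a + 1 < b)) := by
  have h4 := (mem_ascSet_iff h1).1 ha
  ext b
  simp only [Set.Finite.mem_toFinset, Finset.mem_insert, Finset.mem_union, Finset.mem_filter,
    Set.Finite.mem_toFinset]
  constructor
  · intro hb
    rcases Nat.lt_trichotomy b a with h | h | h
    · exact Or.inr (Or.inl ⟨hb, h⟩)
    · exact Or.inl h
    · refine Or.inr (Or.inr ⟨hb, ?_⟩)
      rcases Nat.lt_or_ge (a+1) b with h' | h'
      · exact h'
      · exfalso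
        have hb1 : b = a + 1 := by omega
        have h3 := (mem_ascSet_iff h1).1 hb
        rw [hb1] at h3; omega
  · rintro (rfl | ⟨hb, _⟩ | ⟨hb, _⟩) <;> [exact ha; exact hb; exact hb]

lemma decompB {v : ℕ → ℕ} (h1 : ∀ j, v j ≤ 1) (h2 : (ascSet v).Finite)
    {a : ℕ} (ha : a ∈ ascSet v) (h2' : (ascSet (phiElim a v)).Finite) :
    h2'.toFinset = (if Ecnd a v then ({a-1} : Finset ℕ) else ∅) ∪
      (h2.toFinset.filter (· < a) ∪ (h2.toFinset.filter (fun b => a + 1 < b)).image (· - 2)) := by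
  ext b
  simp only [Set.Finite.mem_toFinset, Finset.mem_union, Finset.mem_filter, Finset.mem_image,
    Set.Finite.mem_toFinset, mem_ascSet_phiElim h1 ha b]
  constructor
  · rintro (⟨hb, hlt⟩ | ⟨hb1, hE⟩ | ⟨hb, hle⟩)
    · exact Or.inr (Or.inl ⟨hb, by omega⟩)
    · left
      rw [if_pos hE]
      simp only [Finset.mem_singleton]; omega
    · exact Or.inr (Or.inr ⟨b + 2, ⟨hb, by omega⟩, by omega⟩)
  · rintro (hb | ⟨hb, hlt⟩ | ⟨c, ⟨hc, hca⟩, rfl⟩)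
    · by_cases hE : Ecnd a v
      · rw [if_pos hE] at hb
        simp only [Finset.mem_singleton] at hb
        subst hb
        have ha1 : 1 ≤ a := hE.1
        exact Or.inr (Or.inl ⟨by omega, hE⟩)
      · rw [if_neg hE] at hb; exact absurd hb (Finset.notMem_empty _)
    · exact Or.inl ⟨hb, asc_lt_strict h1 ha b hb hlt⟩
    · refine Or.inr (Or.inr ⟨by rw [show c - 2 + 2 = c by omega]; exact hc, by omega⟩)

lemma sep_ncard {s : Set ℕ} (hs : s.Finite) (p : ℕ → Prop) :
    {b ∈ s | p b}.ncard = (hs.toFinset.filter p).card := by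
  rw [← Set.ncard_coe_finset]
  congr 1
  ext b
  simp [Set.Finite.mem_toFinset]

lemma a_not_mem_LoU {v : ℕ → ℕ} (h2 : (ascSet v).Finite) (a : ℕ) :
    a ∉ h2.toFinset.filter (· < a) ∪ h2.toFinset.filter (fun b => a + 1 < b) := by
  simp only [Finset.mem_union, Finset.mem_filter, not_or, not_and]
  constructor <;> intro _ <;> omega

lemma disj_LoU {v : ℕ → ℕ} (h2 : (ascSet v).Finite) (a : ℕ) :
    Disjoint (h2.toFinset.filter (· < a)) (h2.toFinset.filter (fun b => a + 1 < b)) := by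
  rw [Finset.disjoint_left]
  intro b hb hb'
  simp only [Finset.mem_filter] at hb hb'
  omega

lemma disj_E_LoU2 {v : ℕ → ℕ} (h1 : ∀ j, v j ≤ 1) (h2 : (ascSet v).Finite)
    {a : ℕ} (ha : a ∈ ascSet v) :
    Disjoint (if Ecnd a v then ({a-1} : Finset ℕ) else ∅)
      (h2.toFinset.filter (· < a) ∪ (h2.toFinset.filter (fun b => a + 1 < b)).image (· - 2)) := by
  split_ifs with hE
  · rw [Finset.disjoint_left]
    intro b hb hb'
    simp only [Finset.mem_singleton] at hb
    subst hb
    have ha1 : 1 ≤ a := hE.1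
    simp only [Finset.mem_union, Finset.mem_filter, Finset.mem_image, Set.Finite.mem_toFinset] at hb'
    rcases hb' with ⟨hmem, hlt⟩ | ⟨c, ⟨hc, hca⟩, hc2⟩
    · have := asc_lt_strict h1 ha _ hmem hlt; omega
    · omega
  · exact Finset.disjoint_empty_left _

lemma disj_Lo_U2 {v : ℕ → ℕ} (h2 : (ascSet v).Finite) (a : ℕ) :
    Disjoint (h2.toFinset.filter (· < a)) ((h2.toFinset.filter (fun b => a + 1 < b)).image (· - 2)) := by
  rw [Finset.disjoint_left]
  intro b hb hb'
  simp only [Finset.mem_filter, Finset.mem_image] at hb hb'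
  obtain ⟨c, ⟨_, hca⟩, hc2⟩ := hb'
  omega

lemma step_comaj {v : ℕ → ℕ} (h1 : ∀ j, v j ≤ 1) (h2 : (ascSet v).Finite)
    {a : ℕ} (ha : a ∈ ascSet v) :
    (comaj v : ℤ) = (comaj (phiElim a v) : ℤ) + a - (if Ecnd a v then (a:ℤ) - 1 else 0)
      + 2 * ({b ∈ ascSet v | a + 1 < b}.ncard : ℤ) := by
  have h2' := ascSet_phiElim_finite h1 h2 ha
  have c1 : (comaj v : ℤ) = ∑ b ∈ h2.toFinset, (b:ℤ) := by
    rw [comaj, finsum_mem_eq_finite_toFinset_sum _ h2, Nat.cast_sum]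
  have c2 : (comaj (phiElim a v) : ℤ) = ∑ b ∈ h2'.toFinset, (b:ℤ) := by
    rw [comaj, finsum_mem_eq_finite_toFinset_sum _ h2', Nat.cast_sum]
  have hinj : ∀ x ∈ h2.toFinset.filter (fun b => a + 1 < b),
      ∀ y ∈ h2.toFinset.filter (fun b => a + 1 < b), x - 2 = y - 2 → x = y := by
    intro x hx y hy hxy
    simp only [Finset.mem_filter] at hx hy
    omega
  have hcast : ∀ x ∈ h2.toFinset.filter (fun b => a + 1 < b),
      ((x - 2 : ℕ) : ℤ) = (x : ℤ) - 2 := by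
    intro x hx
    simp only [Finset.mem_filter] at hx
    omega
  have hU2 : ∑ b ∈ ((h2.toFinset.filter (fun b => a + 1 < b)).image (· - 2) : Finset ℕ), (b:ℤ)
      = (∑ b ∈ h2.toFinset.filter (fun b => a + 1 < b), (b:ℤ))
        - 2 * ((h2.toFinset.filter (fun b => a + 1 < b)).card : ℤ) := by
    rw [Finset.sum_image hinj, Finset.sum_congr rfl hcast, Finset.sum_sub_distrib,
      Finset.sum_const, nsmul_eq_mul]
    ring
  have hE2 : ∑ b ∈ (if Ecnd a v then ({a-1} : Finset ℕ) else ∅), (b:ℤ)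
      = (if Ecnd a v then (a:ℤ) - 1 else 0) := by
    split_ifs with hE
    · have ha1 : 1 ≤ a := hE.1
      rw [Finset.sum_singleton]
      omega
    · simp
  rw [c1, c2, decompA h1 h2 ha, decompB h1 h2 ha h2']
  rw [Finset.sum_insert (a_not_mem_LoU h2 a), Finset.sum_union (disj_LoU h2 a),
    Finset.sum_union (disj_E_LoU2 h1 h2 ha), Finset.sum_union (disj_Lo_U2 h2 a)]
  rw [hU2, hE2, sep_ncard h2 (fun b => a + 1 < b)]
  ring

lemma step_ascN {v : ℕ → ℕ} (h1 : ∀ j, v j ≤ 1) (h2 : (ascSet v).Finite)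
    {a : ℕ} (ha : a ∈ ascSet v) :
    ascN (phiElim a v) + 1 = ascN v + (if Ecnd a v then 1 else 0) := by
  have h2' := ascSet_phiElim_finite h1 h2 ha
  have hinj : Set.InjOn (fun x : ℕ => x - 2) (h2.toFinset.filter (fun b => a + 1 < b)) := by
    intro x hx y hy hxy
    simp only [Finset.coe_filter, Set.mem_setOf_eq] at hx hy
    simp only [] at hxy
    omega
  have c1 : ascN v = h2.toFinset.card := Set.ncard_eq_toFinset_card _ h2
  have c2 : ascN (phiElim a v) = h2'.toFinset.card := Set.ncard_eq_toFinset_card _ h2'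
  rw [c1, c2, decompA h1 h2 ha, decompB h1 h2 ha h2']
  rw [Finset.card_insert_of_notMem (a_not_mem_LoU h2 a), Finset.card_union_of_disjoint (disj_LoU h2 a),
    Finset.card_union_of_disjoint (disj_E_LoU2 h1 h2 ha), Finset.card_union_of_disjoint (disj_Lo_U2 h2 a),
    Finset.card_image_of_injOn hinj]
  split_ifs with hE
  · rw [Finset.card_singleton]; ring
  · rw [Finset.card_empty]; ring

lemma rec_iff {v : ℕ → ℕ} (h1 : ∀ j, v j ≤ 1) (h2 : (ascSet v).Finite)
    {a : ℕ} (ha : a ∈ ascSet v) :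
    (ascN (phiElim a v) < ascN v) ↔ ¬ Ecnd a v := by
  have h := step_ascN h1 h2 ha
  split_ifs at h with hE
  · exact iff_of_false (by omega) (by simp [hE])
  · exact iff_of_true (by omega) hE

lemma step_upper {v : ℕ → ℕ} (h1 : ∀ j, v j ≤ 1) (h2 : (ascSet v).Finite)
    {a c : ℕ} (ha : a ∈ ascSet v) (hc : c ∈ ascSet v) (hca : c + 2 ≤ a)
    (hlo : ∀ b ∈ ascSet v, b < a → b ≤ c) :
    {b ∈ ascSet (phiElim a v) | c + 1 < b}.ncard
      = (if Ecnd a v then 1 else 0) + {b ∈ ascSet v | a + 1 < b}.ncard := by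
  have h2' := ascSet_phiElim_finite h1 h2 ha
  have hEa : Ecnd a v → c + 3 ≤ a := by
    intro hE
    by_contra hcon
    have h3 := (mem_ascSet_iff h1).1 hc
    have h4 : v (a - 1) = v (c + 1) := congrArg v (by omega)
    obtain ⟨-, h5, -⟩ : 1 ≤ a ∧ v (a-1) = 0 ∧ v (a+2) = 1 := hE
    omega
  have hUfin : ({b ∈ ascSet v | a + 1 < b}).Finite := h2.subset (Set.sep_subset _ _)
  have key : {b ∈ ascSet (phiElim a v) | c + 1 < b}
      = (if Ecnd a v then ({a-1} : Set ℕ) else ∅)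
        ∪ ((fun x => x - 2) '' {b ∈ ascSet v | a + 1 < b}) := by
    ext b
    simp only [Set.mem_sep_iff, Set.mem_union, Set.mem_image, mem_ascSet_phiElim h1 ha b]
    constructor
    · rintro ⟨hmem | ⟨hb1, hE⟩ | ⟨hmem, hba⟩, hcb⟩
      · exact absurd (hlo b hmem.1 (by omega)) (by omega)
      · left
        rw [if_pos hE]
        simp only [Set.mem_singleton_iff]
        omega
      · exact Or.inr ⟨b + 2, ⟨hmem, by omega⟩, by omega⟩
    · intro hmem
      rcases hmem with hmem | ⟨d, ⟨hd, hda⟩, rfl⟩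
      · by_cases hE : Ecnd a v
        · rw [if_pos hE] at hmem
          simp only [Set.mem_singleton_iff] at hmem
          subst hmem
          have := hEa hE
          have ha1 : 1 ≤ a := hE.1
          exact ⟨Or.inr (Or.inl ⟨by omega, hE⟩), by omega⟩
        · rw [if_neg hE] at hmem
          exact absurd hmem (Set.notMem_empty _)
      · refine ⟨Or.inr (Or.inr ⟨?_, by omega⟩), by omega⟩
        rw [show d - 2 + 2 = d by omega]
        exact hd
  rw [key]
  have hdisj : Disjoint (if Ecnd a v then ({a-1} : Set ℕ) else ∅)
      ((fun x => x - 2) '' {b ∈ ascSet v | a + 1 < b}) := by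
    split_ifs with hE
    · rw [Set.disjoint_left]
      intro b hb hb'
      simp only [Set.mem_singleton_iff] at hb
      subst hb
      obtain ⟨d, ⟨_, hd⟩, hd2⟩ := hb'
      have hd2' : d - 2 = a - 1 := hd2
      omega
    · exact Set.empty_disjoint _
  have hfin1 : (if Ecnd a v then ({a-1} : Set ℕ) else ∅).Finite := by
    split_ifs
    · exact Set.finite_singleton _
    · exact Set.finite_empty
  rw [Set.ncard_union_eq hdisj hfin1 (hUfin.image _)]
  have hinj : Set.InjOn (fun x : ℕ => x - 2) {b ∈ ascSet v | a + 1 < b} := by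
    intro x hx y hy hxy
    simp only [Set.mem_sep_iff] at hx hy
    simp only [] at hxy
    omega
  rw [Set.ncard_image_of_injOn hinj]
  split_ifs
  · rw [Set.ncard_singleton]
  · rw [Set.ncard_empty]

noncomputable def elimL (ds : List ℕ) (v : ℕ → ℕ) : ℕ → ℕ := ds.foldl (fun w a => phiElim a w) v

noncomputable def rigW : List ℕ → (ℕ → ℕ) → ℤ
  | [], _ => 0
  | a :: as, v => (if ascN (phiElim a v) < ascN v then (a : ℤ) - 2 * as.length - 1 else 0)
      + rigW as (phiElim a v)

lemma GEN (ds : List ℕ) : ∀ (v : ℕ → ℕ) (A : ℕ),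
    (∀ j, v j ≤ 1) → (ascSet v).Finite →
    ds.Pairwise (fun x y => y + 2 ≤ x) →
    (∀ b ∈ ds, b ∈ ascSet v) →
    (∀ a, ds.head? = some a →
      (∀ b ∈ ascSet v, b ∈ ds ∨ a + 1 < b) ∧ {b ∈ ascSet v | a + 1 < b}.ncard = A) →
    (comaj v : ℤ) = comaj (elimL ds v) + rigW ds v + (ds.length : ℤ)^2
        + 2 * A * ds.length := by
  induction ds with
  | nil =>
    intro v A h1 h2 _ _ _
    simp [elimL, rigW]
  | cons a as IH =>
    intro v A h1 h2 hpw hmem hhd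
    have ha : a ∈ ascSet v := hmem a (by simp)
    have h1' := phiElim_le_one h1 a
    have h2' := ascSet_phiElim_finite h1 h2 ha
    obtain ⟨hall, hA⟩ := hhd a rfl
    have htail : ∀ b ∈ as, b + 2 ≤ a := (List.pairwise_cons.1 hpw).1
    have hpw' : as.Pairwise (fun x y => y + 2 ≤ x) := (List.pairwise_cons.1 hpw).2
    have hmem' : ∀ b ∈ as, b ∈ ascSet (phiElim a v) := by
      intro b hb
      exact (mem_ascSet_phiElim h1 ha b).2
        (Or.inl ⟨hmem b (List.mem_cons_of_mem _ hb), by have := htail b hb; omega⟩)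
    have hhd' : ∀ c, as.head? = some c →
        (∀ b ∈ ascSet (phiElim a v), b ∈ as ∨ c + 1 < b) ∧
        {b ∈ ascSet (phiElim a v) | c + 1 < b}.ncard = (if Ecnd a v then A + 1 else A) := by
      intro c hc
      have hcas : c ∈ as := by
        cases as with
        | nil => exact absurd hc (by simp)
        | cons c' t =>
          simp only [List.head?_cons, Option.some.injEq] at hc
          simp [hc.symm]
      have htt : ∀ b ∈ as, b ≤ c := by
        cases as with
        | nil => intro b hb; exact absurd hb (by simp)
        | cons c' t =>
          simp only [List.head?_cons, Option.some.injEq] at hc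
          intro b hb
          rcases List.mem_cons.1 hb with rfl | hb'
          · omega
          · have := (List.pairwise_cons.1 hpw').1 b hb'
            omega
      have hc2 : c + 2 ≤ a := htail c hcas
      have hcv : c ∈ ascSet v := hmem c (List.mem_cons_of_mem _ hcas)
      have hEa : Ecnd a v → c + 3 ≤ a := by
        intro hE
        by_contra hcon
        have h3 := (mem_ascSet_iff h1).1 hcv
        have h4 : v (a - 1) = v (c + 1) := congrArg v (by omega)
        obtain ⟨-, h5, -⟩ : 1 ≤ a ∧ v (a-1) = 0 ∧ v (a+2) = 1 := hE
        omega
      have hlo : ∀ b ∈ ascSet v, b < a → b ≤ c := by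
        intro b hb hba
        rcases hall b hb with hmem2 | hgt
        · rcases List.mem_cons.1 hmem2 with rfl | hmem3
          · omega
          · exact htt b hmem3
        · omega
      constructor
      · intro b hb
        rcases (mem_ascSet_phiElim h1 ha b).1 hb with ⟨hbv, hba⟩ | ⟨hb1, hE⟩ | ⟨hbv, hba⟩
        · rcases hall b hbv with hmem2 | hgt
          · rcases List.mem_cons.1 hmem2 with rfl | hmem3
            · omega
            · exact Or.inl hmem3
          · omega
        · have := hEa hE
          right; omega
        · right; omega
      · rw [step_upper h1 h2 ha hcv hc2 hlo, hA]
        split_ifs <;> omega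
    have hstep := step_comaj h1 h2 ha
    rw [hA] at hstep
    have hrec := rec_iff h1 h2 ha
    have hIH := IH (phiElim a v) (if Ecnd a v then A + 1 else A) h1' h2' hpw' hmem' hhd'
    have helim : elimL (a :: as) v = elimL as (phiElim a v) := rfl
    have hlen : ((a :: as).length : ℤ) = (as.length : ℤ) + 1 := by
      simp [List.length_cons]
    rw [helim, hlen]
    simp only [rigW]
    by_cases hE : Ecnd a v
    · rw [if_pos hE] at hstep hIH
      rw [if_neg (by rw [hrec]; simp [hE])]
      have ha1 : 1 ≤ a := hE.1
      push_cast at hstep hIH ⊢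
      linarith
    · rw [if_neg hE] at hstep hIH
      rw [if_pos (by rw [hrec]; exact hE)]
      push_cast at hstep hIH ⊢
      linarith

def skipL (ds : List ℕ) (j : ℕ) : ℕ := ds.foldr (fun a t => if t < a then t else t + 2) j

lemma skipL_cons (a : ℕ) (as : List ℕ) (j : ℕ) :
    skipL (a :: as) j = (if skipL as j < a then skipL as j else skipL as j + 2) := rfl

lemma elimL_eq_skip (ds : List ℕ) : ∀ (v : ℕ → ℕ) (j : ℕ), elimL ds v j = v (skipL ds j) := by
  induction ds with
  | nil => intro v j; rfl
  | cons a as IH =>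
    intro v j
    rw [show elimL (a :: as) v = elimL as (phiElim a v) from rfl, IH, skipL_cons]
    by_cases h : skipL as j < a
    · rw [if_pos h]; exact if_pos h
    · rw [if_neg h]; exact if_neg h

lemma skipL_strictMono (ds : List ℕ) : StrictMono (skipL ds) := by
  induction ds with
  | nil => exact strictMono_id
  | cons a as IH =>
    intro x y hxy
    have h := IH hxy
    rw [skipL_cons, skipL_cons]
    split_ifs <;> omega

lemma skipL_avoid (ds : List ℕ) (hpw : ds.Pairwise (fun x y => y + 2 ≤ x)) (j : ℕ) :
    ∀ a ∈ ds, skipL ds j ≠ a ∧ skipL ds j ≠ a + 1 := by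
  induction ds with
  | nil => simp
  | cons a as IH =>
    intro b hb
    rcases List.mem_cons.1 hb with rfl | hb'
    · rw [skipL_cons]; split_ifs <;> omega
    · have hba := (List.pairwise_cons.1 hpw).1 b hb'
      have hIH := IH (List.pairwise_cons.1 hpw).2 b hb'
      rw [skipL_cons]; split_ifs <;> omega

lemma skipL_surj (ds : List ℕ) : ∀ (m : ℕ), ds.Pairwise (fun x y => y + 2 ≤ x) →
    (∀ a ∈ ds, m ≠ a ∧ m ≠ a + 1) → ∃ j, skipL ds j = m := by
  induction ds with
  | nil => exact fun m _ _ => ⟨m, rfl⟩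
  | cons a as IH =>
    intro m hpw hm
    have hma := hm a (by simp)
    have htail : ∀ b ∈ as, b + 2 ≤ a := (List.pairwise_cons.1 hpw).1
    have hpw' := (List.pairwise_cons.1 hpw).2
    rcases Nat.lt_or_ge m a with hlt | hge
    · obtain ⟨j, hj⟩ := IH m hpw' (fun b hb => hm b (List.mem_cons_of_mem _ hb))
      exact ⟨j, by rw [skipL_cons, hj, if_pos hlt]⟩
    · have hge2 : a + 2 ≤ m := by omega
      obtain ⟨j, hj⟩ := IH (m - 2) hpw' (by
        intro b hb
        have := htail b hb
        omega)
      refine ⟨j, ?_⟩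
      rw [skipL_cons, hj, if_neg (by omega)]
      omega

lemma nth_eq_of_strictMono {p : ℕ → Prop} (hp : (setOf p).Infinite) {f : ℕ → ℕ}
    (hf : StrictMono f) (hmem : ∀ j, p (f j)) (hsurj : ∀ m, p m → ∃ j, f j = m) (j : ℕ) :
    Nat.nth p j = f j := by
  have hcount : Nat.count p (f j) = j := by
    rw [Nat.count_eq_card_filter_range]
    have him : (Finset.range (f j)).filter p = (Finset.range j).image f := by
      ext m
      simp only [Finset.mem_filter, Finset.mem_range, Finset.mem_image]
      constructor
      · rintro ⟨hmf, hpm⟩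
        obtain ⟨i, rfl⟩ := hsurj m hpm
        exact ⟨i, hf.lt_iff_lt.1 hmf, rfl⟩
      · rintro ⟨i, hij, rfl⟩
        exact ⟨hf hij, hmem i⟩
    rw [him, Finset.card_image_of_injective _ hf.injective, Finset.card_range]
  have h := Nat.nth_count (p := p) (hmem j)
  rw [hcount] at h
  exact h

lemma mem_ascList {v : ℕ → ℕ} (h2 : (ascSet v).Finite) {b : ℕ} :
    b ∈ ascList v ↔ b ∈ ascSet v := by
  rw [ascList, dif_pos h2, List.mem_reverse, Finset.mem_sort, Set.Finite.mem_toFinset]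

lemma asc_gap {v : ℕ → ℕ} (h1 : ∀ j, v j ≤ 1) {x y : ℕ} (hx : x ∈ ascSet v)
    (hy : y ∈ ascSet v) (hxy : x < y) : x + 2 ≤ y := by
  by_contra hc
  have hxy1 : y = x + 1 := by omega
  have h3 := (mem_ascSet_iff h1).1 hx
  have h4 := (mem_ascSet_iff h1).1 hy
  rw [hxy1] at h4
  omega

lemma ascList_pairwise {v : ℕ → ℕ} (h1 : ∀ j, v j ≤ 1) (h2 : (ascSet v).Finite) :
    (ascList v).Pairwise (fun x y => y + 2 ≤ x) := by
  rw [ascList, dif_pos h2, List.pairwise_reverse]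
  have hs := (Finset.sortedLT_sort h2.toFinset).pairwise
  refine List.Pairwise.imp_of_mem ?_ hs
  intro x y hxmem hymem hxy
  have hx : x ∈ ascSet v := by
    rw [← Set.Finite.mem_toFinset h2, ← Finset.mem_sort (· ≤ ·)]; exact hxmem
  have hy : y ∈ ascSet v := by
    rw [← Set.Finite.mem_toFinset h2, ← Finset.mem_sort (· ≤ ·)]; exact hymem
  exact asc_gap h1 hx hy hxy

lemma ascList_length {v : ℕ → ℕ} (h2 : (ascSet v).Finite) :
    (ascList v).length = ascN v := by
  rw [ascList, dif_pos h2, List.length_reverse, Finset.length_sort,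
    ascN, Set.ncard_eq_toFinset_card _ h2]

lemma ascList_nodup {v : ℕ → ℕ} (h2 : (ascSet v).Finite) : (ascList v).Nodup := by
  rw [ascList, dif_pos h2]
  rw [List.nodup_reverse]
  exact Finset.sort_nodup _ _

lemma removed01_iff {v : ℕ → ℕ} (h2 : (ascSet v).Finite) (m : ℕ) :
    removed01 v m ↔ ∃ a ∈ ascList v, m = a ∨ m = a + 1 := by
  constructor
  · intro h
    rcases h with h | ⟨hm, h⟩
    · exact ⟨m, (mem_ascList h2).2 h, Or.inl rfl⟩
    · refine ⟨m - 1, (mem_ascList h2).2 ?_, Or.inr (by omega)⟩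
      show v (m-1) < v (m-1+1)
      rw [show m - 1 + 1 = m by omega]
      exact h
  · rintro ⟨a, ha, rfl | rfl⟩
    · exact Or.inl ((mem_ascList h2).1 ha)
    · refine Or.inr ⟨by omega, ?_⟩
      rw [show a + 1 - 1 = a by omega]
      exact (mem_ascList h2).1 ha

lemma elim01_eq_elimL {v : ℕ → ℕ} (h1 : ∀ j, v j ≤ 1) (h2 : (ascSet v).Finite) :
    elim01 v = elimL (ascList v) v := by
  have hpw := ascList_pairwise h1 h2
  have hfin : (setOf (removed01 v)).Finite := by
    apply Set.Finite.subset (h2.union (h2.image (· + 1)))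
    intro m hm
    rcases (removed01_iff h2 m).1 hm with ⟨a, ha, rfl | rfl⟩
    · exact Or.inl ((mem_ascList h2).1 ha)
    · exact Or.inr ⟨a, (mem_ascList h2).1 ha, rfl⟩
  funext j
  rw [elim01, elimL_eq_skip]
  congr 1
  refine nth_eq_of_strictMono ?_ (skipL_strictMono _) ?_ ?_ j
  · have : {i | ¬ removed01 v i} = (setOf (removed01 v))ᶜ := rfl
    show (setOf (removed01 v))ᶜ.Infinite
    exact hfin.infinite_compl
  · intro i
    rw [removed01_iff h2]
    rintro ⟨a, ha, h⟩
    have := skipL_avoid (ascList v) hpw i a ha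
    omega
  · intro m hm
    rw [removed01_iff h2] at hm
    push_neg at hm
    refine skipL_surj (ascList v) m hpw ?_
    intro a ha
    have := hm a ha
    omega

lemma fren_eq {S : Set ℕ} (hfin : S.Finite) (hadj : ∀ k ∈ S, k + 1 ∉ S) {a : ℕ} (ha : a ∈ S) :
    fren S (a : ℤ) = (a : ℤ) - 2 * ({k ∈ S | k < a}.ncard : ℤ) - 1 := by
  have hLfin : ({k ∈ S | k < a}).Finite := hfin.subset (Set.sep_subset _ _)
  have hM : {m : ℕ | (m : ℤ) ≤ (a : ℤ) ∧ (m ∈ S ∨ ∃ k ∈ S, m = k + 1)}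
      = insert a {k ∈ S | k < a} ∪ ((fun k => k + 1) '' {k ∈ S | k < a}) := by
    ext m
    simp only [Set.mem_setOf_eq, Set.mem_union, Set.mem_insert_iff, Set.mem_sep_iff,
      Set.mem_image, Nat.cast_le]
    constructor
    · rintro ⟨hma, hm | ⟨k, hk, rfl⟩⟩
      · rcases Nat.lt_or_ge m a with h | h
        · exact Or.inl (Or.inr ⟨hm, h⟩)
        · exact Or.inl (Or.inl (by omega))
      · refine Or.inr ⟨k, ⟨hk, ?_⟩, rfl⟩
        rcases Nat.lt_or_ge k a with h | h
        · exact h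
        · have hka : k + 1 = a := by omega
          exact absurd (hka ▸ ha) (hadj k hk)
    · rintro ((rfl | ⟨hm, hma⟩) | ⟨k, ⟨hk, hka⟩, rfl⟩)
      · exact ⟨le_refl _, Or.inl ha⟩
      · exact ⟨by omega, Or.inl hm⟩
      · exact ⟨by omega, Or.inr ⟨k, hk, rfl⟩⟩
  have hanotin : a ∉ ((fun k => k + 1) '' {k ∈ S | k < a}) := by
    rintro ⟨k, ⟨hk, _⟩, hka⟩
    simp only [] at hka
    exact absurd (hka ▸ ha) (hadj k hk)
  have hdisj : Disjoint (insert a {k ∈ S | k < a}) ((fun k => k + 1) '' {k ∈ S | k < a}) := by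
    rw [Set.disjoint_left]
    rintro m hm ⟨k, ⟨hk, _⟩, rfl⟩
    rcases Set.mem_insert_iff.1 hm with rfl | ⟨hm', _⟩
    · exact hanotin ⟨k, ⟨hk, by omega⟩, rfl⟩
    · exact (hadj k hk) hm'
  have hcard : ({m : ℕ | (m : ℤ) ≤ (a : ℤ) ∧ (m ∈ S ∨ ∃ k ∈ S, m = k + 1)}).ncard
      = 2 * {k ∈ S | k < a}.ncard + 1 := by
    rw [hM, Set.ncard_union_eq hdisj (hLfin.insert a) (hLfin.image _),
      Set.ncard_insert_of_notMem (by rintro ⟨_, h⟩; omega) hLfin,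
      Set.ncard_image_of_injOn (by intro x _ y _ h; simpa using h)]
    ring
  rw [fren, hcard]
  push_cast
  ring

lemma rig_sum (g : ℕ → ℤ) : ∀ (ds : List ℕ) (v : ℕ → ℕ),
    ds.Pairwise (fun x y => x > y) →
    (∀ a ∈ ds, g a = (a : ℤ) - 2 * (ds.countP (fun b => decide (b < a)) : ℤ) - 1) →
    ((rig01Aux ds v).map g).sum = rigW ds v := by
  intro ds
  induction ds with
  | nil => intro v _ _; simp [rig01Aux, rigW]
  | cons a as IH =>
    intro v hpw hg
    have hlt : ∀ b ∈ as, b < a := fun b hb => (List.pairwise_cons.1 hpw).1 b hb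
    have hga : g a = (a:ℤ) - 2 * (as.length : ℤ) - 1 := by
      have h := hg a List.mem_cons_self
      rw [List.countP_cons] at h
      rw [h]
      have hcnt : as.countP (fun b => decide (b < a)) = as.length :=
        List.countP_eq_length.2 (fun b hb => by simpa using hlt b hb)
      rw [hcnt, if_neg (by simp)]
      push_cast
      ring
    have hg' : ∀ b ∈ as, g b = (b:ℤ) - 2 * (as.countP (fun c => decide (c < b)) : ℤ) - 1 := by
      intro b hb
      have h := hg b (List.mem_cons_of_mem _ hb)
      rw [List.countP_cons, if_neg (by simp only [decide_eq_true_eq]; have := hlt b hb; omega)] at h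
      simpa using h
    simp only [rig01Aux, rigW]
    by_cases hrec : ascN (phiElim a v) < ascN v
    · rw [if_pos hrec, if_pos hrec]
      simp only [List.map_cons, List.sum_cons]
      rw [IH (phiElim a v) (List.pairwise_cons.1 hpw).2 hg', hga]
    · rw [if_neg hrec, if_neg hrec]
      rw [IH (phiElim a v) (List.pairwise_cons.1 hpw).2 hg']
      simp

lemma countP_eq_ncard {v : ℕ → ℕ} (h2 : (ascSet v).Finite) (a : ℕ) :
    (ascList v).countP (fun b => decide (b < a)) = {k ∈ ascSet v | k < a}.ncard := by
  rw [List.countP_eq_length_filter]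
  have hnd : ((ascList v).filter (fun b => decide (b < a))).Nodup := (ascList_nodup h2).filter _
  rw [← List.toFinset_card_of_nodup hnd, ← Set.ncard_coe_finset]
  congr 1
  ext b
  simp only [Finset.coe_sort_coe, List.coe_toFinset, Set.mem_setOf_eq, List.mem_filter,
    Set.mem_sep_iff, decide_eq_true_eq]
  rw [mem_ascList h2]

lemma asc_adj {v : ℕ → ℕ} (h1 : ∀ j, v j ≤ 1) : ∀ k ∈ ascSet v, k + 1 ∉ ascSet v := by
  intro k hk hk1
  have h3 := (mem_ascSet_iff h1).1 hk
  have h4 := (mem_ascSet_iff h1).1 hk1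
  omega

lemma rho01List_eq (v : ℕ → ℕ) :
    rho01List v = (rig01Aux (ascList v) v).map (fun i : ℕ => fren (ascSet v) (i : ℤ)) := by
  rw [rho01List]
  generalize rig01Aux (ascList v) v = l
  induction l with
  | nil => rfl
  | cons a t IH => simpa using IH

lemma MAIN {v : ℕ → ℕ} (h1 : ∀ j, v j ≤ 1) (h2 : (ascSet v).Finite) :
    (comaj v : ℤ) = (comaj (elim01 v) : ℤ) + (ascN v : ℤ) ^ 2 + (rho01List v).sum := by
  have hpw := ascList_pairwise h1 h2
  have hmem : ∀ b ∈ ascList v, b ∈ ascSet v := fun b hb => (mem_ascList h2).1 hb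
  have hhd : ∀ a, (ascList v).head? = some a →
      (∀ b ∈ ascSet v, b ∈ ascList v ∨ a + 1 < b) ∧ {b ∈ ascSet v | a + 1 < b}.ncard = 0 := by
    intro a ha
    have hamax : ∀ b ∈ ascList v, b ≤ a := by
      intro b hb
      cases hl : ascList v with
      | nil => rw [hl] at hb; exact absurd hb (by simp)
      | cons c t =>
        rw [hl] at ha hb hpw
        simp only [List.head?_cons, Option.some.injEq] at ha
        subst ha
        rcases List.mem_cons.1 hb with rfl | hb'
        · exact le_refl _
        · have := (List.pairwise_cons.1 hpw).1 b hb'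
          omega
    constructor
    · intro b hb
      exact Or.inl ((mem_ascList h2).2 hb)
    · rw [Set.ncard_eq_zero (h2.subset (Set.sep_subset _ _))]
      rw [Set.eq_empty_iff_forall_notMem]
      rintro b ⟨hb, hab⟩
      have := hamax b ((mem_ascList h2).2 hb)
      omega
  have hG := GEN (ascList v) v 0 h1 h2 hpw hmem hhd
  have hlen : ((ascList v).length : ℤ) = (ascN v : ℤ) := by
    rw [ascList_length h2]
  have hrho : (rho01List v).sum = rigW (ascList v) v := by
    rw [rho01List_eq]
    refine rig_sum _ (ascList v) v (hpw.imp (by intro a b h; omega)) ?_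
    intro a ha
    rw [countP_eq_ncard h2 a]
    exact fren_eq h2 (asc_adj h1) ((mem_ascList h2).1 ha)
  rw [elim01_eq_elimL h1 h2, hG, hrho, hlen]
  ring

def flp (u : ℕ → ℕ) : ℕ → ℕ := fun j => 1 - u j

lemma flp_le_one (u : ℕ → ℕ) : ∀ j, flp u j ≤ 1 := fun j => by simp only [flp]; omega

lemma ascSet_flp {u : ℕ → ℕ} (h1 : ∀ j, u j ≤ 1) : ascSet (flp u) = descSet u := by
  ext j
  have := h1 j; have := h1 (j+1)
  simp only [ascSet, descSet, Set.mem_setOf_eq, flp]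
  omega

lemma phiElim_flp (a : ℕ) (u : ℕ → ℕ) : phiElim a (flp u) = flp (phiElim a u) := by
  funext j
  simp only [phiElim, flp]
  split_ifs <;> rfl

lemma ascN_flp {u : ℕ → ℕ} (h1 : ∀ j, u j ≤ 1) : ascN (flp u) = desN u := by
  rw [ascN, desN, ascSet_flp h1]

lemma comaj_flp {u : ℕ → ℕ} (h1 : ∀ j, u j ≤ 1) : comaj (flp u) = maj u := by
  rw [comaj, maj, ascSet_flp h1]

lemma rig_flp : ∀ (ds : List ℕ) (u : ℕ → ℕ), (∀ j, u j ≤ 1) →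
    rig01Aux ds (flp u) = rig10Aux ds u := by
  intro ds
  induction ds with
  | nil => intro u h1; rfl
  | cons a as IH =>
    intro u h1
    have h1' := phiElim_le_one h1 a
    simp only [rig01Aux, rig10Aux, phiElim_flp, ascN_flp h1', ascN_flp h1, IH (phiElim a u) h1']

lemma removed01_flp {u : ℕ → ℕ} (h1 : ∀ j, u j ≤ 1) (j : ℕ) :
    removed01 (flp u) j ↔ removed10 u j := by
  have := h1 j; have := h1 (j+1); have := h1 (j-1)
  simp only [removed01, removed10, flp]
  omega

lemma elim01_flp {u : ℕ → ℕ} (h1 : ∀ j, u j ≤ 1) : elim01 (flp u) = flp (elim10 u) := by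
  have hpred : (fun i => ¬ removed01 (flp u) i) = (fun i => ¬ removed10 u i) :=
    funext fun i => propext (not_congr (removed01_flp h1 i))
  funext j
  rw [elim01, hpred]
  rfl

lemma descList_flp {u : ℕ → ℕ} (h1 : ∀ j, u j ≤ 1) : descList u = ascList (flp u) := by
  have hset : ascSet (flp u) = descSet u := ascSet_flp h1
  rw [descList, ascList]
  by_cases h : (descSet u).Finite
  · have h' : (ascSet (flp u)).Finite := by rw [hset]; exact h
    rw [dif_pos h, dif_pos h']
    have htf : h'.toFinset = h.toFinset := by
      ext x
      simp only [Set.Finite.mem_toFinset, hset]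
    rw [htf]
  · have h' : ¬ (ascSet (flp u)).Finite := by rw [hset]; exact h
    rw [dif_neg h, dif_neg h']

lemma elim10_le_one {u : ℕ → ℕ} (h1 : ∀ j, u j ≤ 1) : ∀ j, elim10 u j ≤ 1 :=
  fun _ => h1 _


/-- the recursions for the comajor and major indices under
01- and 10-elimination. -/
theorem stmt17 (u : ℕ → ℕ) (hu : IsState u) :
    (comaj u : ℤ) = (comaj (elim01 u) : ℤ) + (ascN u : ℤ) ^ 2 + (rho01List u).sum ∧
    (maj u : ℤ) = (maj (elim10 u) : ℤ) + (desN u : ℤ) ^ 2 + (rho10List u).sum := by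
  obtain ⟨-, h1, hones⟩ := hu
  constructor
  · exact MAIN h1 (ascSet_finite_of_ones hones h1)
  · have h1f := flp_le_one u
    have h2f : (ascSet (flp u)).Finite := by
      rw [ascSet_flp h1]
      exact descSet_finite_of_ones hones h1
    have hM := MAIN h1f h2f
    rw [comaj_flp h1, ascN_flp h1, elim01_flp h1, comaj_flp (elim10_le_one h1)] at hM
    have hrho : rho01List (flp u) = rho10List u := by
      rw [rho01List, rho10List, ascSet_flp h1, ← descList_flp h1, rig_flp _ u h1]
    rw [hrho] at hM
    exact hM
end
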